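/- arXiv:2506.06814 — 7 statements merged into one kernel-verified Lean document; each statement's English description precedes it below -/
import Mathlib

section
/- Consider a point particle of charge q and rest mass m in the electromagnetic field E(t,x) = ε⊥(ct − z) + E^z(t,z) e_z, B(t,x) = e_z × ε⊥(ct − z), where ε⊥ : ℝ → ℝ³ is continuous with vanishing third component and E^z : ℝ² → ℝ is continuous. Suppose t ↦ (x(t), u(t)) solves du/dt = (q/(mc))[E(t,x(t)) + (u/γ) × B(t,x(t))] and dx/dt = c u/γ, with γ = √(1+|u|²). Let ξ̃(t) = ct − z(t), which is strictly increasing, let t̂ be its inverse, and set û⊥(ξ) := u⊥(t̂(ξ)) (the first two components of u). Then û⊥ is differentiable and dû⊥/dξ = (q/(mc²)) ε⊥(ξ); in particular, if u⊥(t₀) = 0 then û⊥(ξ) = (q/(mc²)) ∫_{ξ̃(t₀)}^{ξ} ε⊥(ζ) dζ. -/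
/-!
Along the worldline the transverse equation of motion reads
`du⊥/dt = (q/(mc)) ε⊥(ξ̃) (1 - u_z/γ) = (q/(mc²)) ε⊥(ξ̃(t)) dξ̃/dt`, since `dξ̃/dt = c (1 - u_z/γ)`.
As `u_z < γ`, `ξ̃` is strictly increasing with nonvanishing derivative, so the chain rule through
its inverse gives `dû⊥/dξ = (q/(mc²)) ε⊥(ξ)`, and `u⊥ - (q/(mc²)) ∫^{ξ̃(t)} ε⊥` has zero
derivative in `t`.
-/

open Set Filter Function Topology

theorem StrictMono.tendsto_leftInverse_nhdsWithin_range {φ ψ : ℝ → ℝ} (hφ : StrictMono φ)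
    (hcont : Continuous φ) (hψφ : LeftInverse ψ φ) (t : ℝ) :
    Tendsto ψ (𝓝[range φ] (φ t)) (𝓝 t) := by
  have hemb := hφ.isEmbedding_of_ordConnected (isPreconnected_range hcont).ordConnected
  rw [← hemb.map_nhds_eq, tendsto_map'_iff, hψφ.comp_eq_id]
  exact tendsto_id

theorem StrictMono.hasDerivWithinAt_leftInverse {φ ψ : ℝ → ℝ} (hφ : StrictMono φ)
    (hcont : Continuous φ) (hψφ : LeftInverse ψ φ) {t d : ℝ} (hφd : HasDerivAt φ d t)
    (hd : d ≠ 0) : HasDerivWithinAt ψ d⁻¹ (range φ) (φ t) := by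
  rw [← hψφ t] at hφd
  refine ((hφd.hasFDerivAt_equiv hd).hasFDerivWithinAt (s := univ)).of_local_left_inverse ?_
    (mem_range_self t) ?_
  · rw [nhdsWithin_univ, hψφ]
    exact hφ.tendsto_leftInverse_nhdsWithin_range hcont hψφ t
  · filter_upwards [self_mem_nhdsWithin] with _ ⟨s, hs⟩
    rw [← hs, hψφ]

theorem HasDerivAt.hasDerivWithinAt_comp_leftInverse {u φ ψ : ℝ → ℝ} (hφ : StrictMono φ)
    (hcont : Continuous φ) (hψφ : LeftInverse ψ φ) {t a d : ℝ} (hu : HasDerivAt u (a * d) t)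
    (hφd : HasDerivAt φ d t) (hd : d ≠ 0) :
    HasDerivWithinAt (u ∘ ψ) a (range φ) (φ t) := by
  rw [← hψφ t] at hu
  simpa [mul_assoc, hd] using hu.comp_hasDerivWithinAt (φ t)
    (hφ.hasDerivWithinAt_leftInverse hcont hψφ hφd hd)

theorem eq_add_mul_integral_of_hasDerivAt_comp {u φ φ' ε : ℝ → ℝ} {k : ℝ} (hε : Continuous ε)
    (hφ : ∀ s, HasDerivAt φ (φ' s) s) (hu : ∀ s, HasDerivAt u (k * ε (φ s) * φ' s) s)
    (t₀ t : ℝ) : u t = u t₀ + k * ∫ ζ in φ t₀..φ t, ε ζ := by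
  set F : ℝ → ℝ := fun s => k * ∫ ζ in φ t₀..φ s, ε ζ
  have hF : ∀ s, HasDerivAt F (k * ε (φ s) * φ' s) s := fun s => by
    rw [mul_assoc]
    exact (((hε.integral_hasStrictDerivAt (φ t₀) (φ s)).hasDerivAt).comp s (hφ s)).const_mul k
  have hconst := is_const_of_deriv_eq_zero (f := u - F)
    (fun s => ((hu s).sub (hF s)).differentiableAt)
    (fun s => by simpa using ((hu s).sub (hF s)).deriv) t t₀
  simp only [Pi.sub_apply, F, intervalIntegral.integral_same, mul_zero, sub_zero] at hconst
  linarith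

theorem lt_sqrt_one_add_sq_add_sq_add_sq (a b u : ℝ) : u < √(1 + (a ^ 2 + b ^ 2 + u ^ 2)) :=
  calc u ≤ |u| := le_abs_self u
    _ = √(u ^ 2) := (Real.sqrt_sq_eq_abs u).symm
    _ < √(1 + (a ^ 2 + b ^ 2 + u ^ 2)) := by gcongr; linarith [sq_nonneg a, sq_nonneg b]

theorem transverse_force_eq (q m c e u γ : ℝ) (hc : c ≠ 0) :
    q / (m * c) * (e - u * e / γ) = q / (m * c ^ 2) * e * (c * (1 - u / γ)) := by
  have hk : q / (m * c ^ 2) * c = q / (m * c) := by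
    rw [div_mul_eq_mul_div, sq, ← mul_assoc, mul_div_mul_right _ _ hc]
  rw [← hk]
  ring

theorem stmt_3_general (q m c : ℝ) (hc : 0 < c)
    (ε1 ε2 : ℝ → ℝ) (hε1 : Continuous ε1) (hε2 : Continuous ε2)
    (x3 u1 u2 u3 γ : ℝ → ℝ)
    (hγ : ∀ t, γ t = Real.sqrt (1 + ((u1 t) ^ 2 + (u2 t) ^ 2 + (u3 t) ^ 2)))
    (hx3 : ∀ t, HasDerivAt x3 (c * u3 t / γ t) t)
    (hu1 : ∀ t, HasDerivAt u1
      (q / (m * c) * (ε1 (c * t - x3 t) - u3 t * ε1 (c * t - x3 t) / γ t)) t)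
    (hu2 : ∀ t, HasDerivAt u2
      (q / (m * c) * (ε2 (c * t - x3 t) - u3 t * ε2 (c * t - x3 t) / γ t)) t)
    (that : ℝ → ℝ) (hthat : ∀ t, that (c * t - x3 t) = t) :
    StrictMono (fun t : ℝ => c * t - x3 t) ∧
    (∀ t : ℝ,
      HasDerivWithinAt (fun ξ => u1 (that ξ)) (q / (m * c ^ 2) * ε1 (c * t - x3 t))
        (Set.range fun τ : ℝ => c * τ - x3 τ) (c * t - x3 t) ∧
      HasDerivWithinAt (fun ξ => u2 (that ξ)) (q / (m * c ^ 2) * ε2 (c * t - x3 t))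
        (Set.range fun τ : ℝ => c * τ - x3 τ) (c * t - x3 t)) ∧
    (∀ t₀ t : ℝ, u1 t₀ = 0 → u2 t₀ = 0 →
      u1 t = q / (m * c ^ 2) * ∫ ζ in (c * t₀ - x3 t₀)..(c * t - x3 t), ε1 ζ ∧
      u2 t = q / (m * c ^ 2) * ∫ ζ in (c * t₀ - x3 t₀)..(c * t - x3 t), ε2 ζ) := by
  set ξ : ℝ → ℝ := fun τ => c * τ - x3 τ
  set ξ' : ℝ → ℝ := fun τ => c * (1 - u3 τ / γ τ)
  have hξ : ∀ t, HasDerivAt ξ (ξ' t) t := fun t => by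
    refine (((hasDerivAt_id' t).const_mul c).sub (hx3 t)).congr_deriv ?_
    simp only [ξ']
    ring
  have hξ'_pos : ∀ t, 0 < ξ' t := fun t => by
    have hγ_pos : 0 < γ t := hγ t ▸ Real.sqrt_pos.2 (by positivity)
    have hu3_lt : u3 t < γ t := hγ t ▸ lt_sqrt_one_add_sq_add_sq_add_sq _ _ _
    exact mul_pos hc (sub_pos.2 ((div_lt_one hγ_pos).2 hu3_lt))
  have hmono : StrictMono ξ := strictMono_of_deriv_pos fun t => (hξ t).deriv ▸ hξ'_pos t
  have hξ_cont : Continuous ξ := continuous_iff_continuousAt.2 fun t => (hξ t).continuousAt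
  have hu1' : ∀ t, HasDerivAt u1 (q / (m * c ^ 2) * ε1 (ξ t) * ξ' t) t := fun t => by
    rw [← transverse_force_eq _ _ _ _ _ _ hc.ne']; exact hu1 t
  have hu2' : ∀ t, HasDerivAt u2 (q / (m * c ^ 2) * ε2 (ξ t) * ξ' t) t := fun t => by
    rw [← transverse_force_eq _ _ _ _ _ _ hc.ne']; exact hu2 t
  refine ⟨hmono, fun t => ⟨?_, ?_⟩, fun t₀ t h1 h2 => ⟨?_, ?_⟩⟩
  · exact (hu1' t).hasDerivWithinAt_comp_leftInverse hmono hξ_cont hthat (hξ t) (hξ'_pos t).ne'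
  · exact (hu2' t).hasDerivWithinAt_comp_leftInverse hmono hξ_cont hthat (hξ t) (hξ'_pos t).ne'
  · simpa [h1] using eq_add_mul_integral_of_hasDerivAt_comp hε1 hξ hu1' t₀ t
  · simpa [h2] using eq_add_mul_integral_of_hasDerivAt_comp hε2 hξ hu2' t₀ t

/-- For a charge in the field of a transverse plane travelling wave `ε⊥(ct-z)`
(with `B = e_z × ε⊥`) plus a longitudinal field `E^z(t,z) e_z`, the transverse
4-velocity as a function of `ξ = ct - z` satisfies `dû⊥/dξ = (q/(mc²)) ε⊥(ξ)`;
in particular if `u⊥(t₀) = 0` then `û⊥(ξ) = (q/(mc²)) ∫_{ξ̃(t₀)}^{ξ} ε⊥`. -/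
theorem stmt_3 (q m c : ℝ) (hm : 0 < m) (hc : 0 < c)
    (ε1 ε2 : ℝ → ℝ) (hε1 : Continuous ε1) (hε2 : Continuous ε2)
    (Ez : ℝ → ℝ → ℝ) (hEz : Continuous fun p : ℝ × ℝ => Ez p.1 p.2)
    (x1 x2 x3 u1 u2 u3 γ : ℝ → ℝ)
    (hγ : ∀ t, γ t = Real.sqrt (1 + ((u1 t) ^ 2 + (u2 t) ^ 2 + (u3 t) ^ 2)))
    (hx1 : ∀ t, HasDerivAt x1 (c * u1 t / γ t) t)
    (hx2 : ∀ t, HasDerivAt x2 (c * u2 t / γ t) t)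
    (hx3 : ∀ t, HasDerivAt x3 (c * u3 t / γ t) t)
    (hu1 : ∀ t, HasDerivAt u1
      (q / (m * c) * (ε1 (c * t - x3 t) - u3 t * ε1 (c * t - x3 t) / γ t)) t)
    (hu2 : ∀ t, HasDerivAt u2
      (q / (m * c) * (ε2 (c * t - x3 t) - u3 t * ε2 (c * t - x3 t) / γ t)) t)
    (hu3 : ∀ t, HasDerivAt u3
      (q / (m * c) * (Ez t (x3 t)
        + (u1 t * ε1 (c * t - x3 t) + u2 t * ε2 (c * t - x3 t)) / γ t)) t)
    (that : ℝ → ℝ) (hthat : ∀ t, that (c * t - x3 t) = t) :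
    StrictMono (fun t : ℝ => c * t - x3 t) ∧
    (∀ t : ℝ,
      HasDerivWithinAt (fun ξ => u1 (that ξ)) (q / (m * c ^ 2) * ε1 (c * t - x3 t))
        (Set.range fun τ : ℝ => c * τ - x3 τ) (c * t - x3 t) ∧
      HasDerivWithinAt (fun ξ => u2 (that ξ)) (q / (m * c ^ 2) * ε2 (c * t - x3 t))
        (Set.range fun τ : ℝ => c * τ - x3 τ) (c * t - x3 t)) ∧
    (∀ t₀ t : ℝ, u1 t₀ = 0 → u2 t₀ = 0 →
      u1 t = q / (m * c ^ 2) * ∫ ζ in (c * t₀ - x3 t₀)..(c * t - x3 t), ε1 ζ ∧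
      u2 t = q / (m * c ^ 2) * ∫ ζ in (c * t₀ - x3 t₀)..(c * t - x3 t), ε2 ζ) :=
  stmt_3_general q m c hc ε1 ε2 hε1 hε2 x3 u1 u2 u3 γ hγ hx3 hu1 hu2 that hthat
end

section
/- Consider a point particle of charge q and rest mass m in the electromagnetic field E(t,x) = ε⊥(ct − z) + E^z(t,z) e_z, B(t,x) = e_z × ε⊥(ct − z), where ε⊥ : ℝ → ℝ³ is continuous with vanishing third component and E^z : ℝ² → ℝ is continuous. Suppose t ↦ (x(t), u(t)) solves du/dt = (q/(mc))[E(t,x(t)) + (u/γ) × B(t,x(t))] and dx/dt = c u/γ, with γ = √(1+|u|²). Let ξ̃(t) = ct − z(t) with inverse t̂, and set ẑ(ξ) := z(t̂(ξ)), û⊥(ξ) := u⊥(t̂(ξ)), ŝ(ξ) := γ(t̂(ξ)) − u_z(t̂(ξ)), v(ξ) := |û⊥(ξ)|². Then dẑ/dξ = (1 + v(ξ))/(2 ŝ(ξ)²) − 1/2 and dŝ/dξ = −(q/(mc²)) E^z(t̂(ξ), ẑ(ξ)). -/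
/-!
Along the motion `dξ̃/dt = c (γ - u_z) / γ = c s / γ > 0`, because `|u_z| < γ`; hence `ξ̃` is a
strictly increasing homeomorphism onto its range and `t̂` is differentiable along that range with
derivative `γ / (c s)`. By the chain rule `dẑ/dξ = u_z / s`, which is `(1 + v) / (2 s²) - 1 / 2`
since `1 + v = γ² - u_z² = s (γ + u_z)`. The magnetic force does no work, so
`dγ/dt = (q / (m c)) (u · E) / γ`; in `ds/dt` the transverse contributions then cancel, leaving
`-(q / (m c)) E^z s / γ`.
-/

open Set Filter Topology Function

theorem StrictMono.hasDerivWithinAt_range_of_leftInverse {g h : ℝ → ℝ} {w t : ℝ}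
    (hmono : StrictMono g) (hcont : Continuous g) (hinv : LeftInverse h g)
    (hg : HasDerivAt g w t) (hw : w ≠ 0) :
    HasDerivWithinAt h w⁻¹ (range g) (g t) := by
  have hemb : IsEmbedding g :=
    hmono.isEmbedding_of_ordConnected (isPreconnected_range hcont).ordConnected
  have hright : ∀ᶠ ξ in 𝓝[range g] (g t), g (h ξ) = ξ :=
    eventually_nhdsWithin_of_forall fun _ ⟨τ, hτ⟩ => hτ ▸ congrArg g (hinv τ)
  have hcont_h : Tendsto h (𝓝[range g] (g t)) (𝓝[univ] (h (g t))) := by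
    rw [nhdsWithin_univ, hinv t, hemb.tendsto_nhds_iff]
    exact tendsto_nhdsWithin_of_tendsto_nhds tendsto_id |>.congr' (hright.mono fun _ h => h.symm)
  rw [← hinv t] at hg
  simpa using ((hg.hasFDerivAt_equiv hw).hasFDerivWithinAt.of_local_left_inverse hcont_h
    (mem_range_self t) hright).hasDerivWithinAt

theorem HasDerivAt.comp_leftInverse_range {f g h : ℝ → ℝ} {d w t : ℝ}
    (hf : HasDerivAt f d t) (hmono : StrictMono g) (hcont : Continuous g)
    (hinv : LeftInverse h g) (hg : HasDerivAt g w t) (hw : w ≠ 0) :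
    HasDerivWithinAt (fun ξ => f (h ξ)) (d / w) (range g) (g t) := by
  rw [div_eq_mul_inv]
  exact (hinv t ▸ hf).comp_hasDerivWithinAt (g t)
    (hmono.hasDerivWithinAt_range_of_leftInverse hcont hinv hg hw)

noncomputable def lorentzFactor (a b c : ℝ) : ℝ := √(1 + (a ^ 2 + b ^ 2 + c ^ 2))

theorem sq_lorentzFactor (a b c : ℝ) : lorentzFactor a b c ^ 2 = 1 + (a ^ 2 + b ^ 2 + c ^ 2) :=
  Real.sq_sqrt (by positivity)

theorem lorentzFactor_pos (a b c : ℝ) : 0 < lorentzFactor a b c :=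
  Real.sqrt_pos.2 (by positivity)

theorem lt_lorentzFactor (a b c : ℝ) : c < lorentzFactor a b c :=
  calc c ≤ |c| := le_abs_self c
    _ = √(c ^ 2) := (Real.sqrt_sq_eq_abs c).symm
    _ < lorentzFactor a b c :=
      Real.sqrt_lt_sqrt (sq_nonneg c) (by nlinarith [sq_nonneg a, sq_nonneg b])

theorem div_lorentzFactor_sub_self (a b c : ℝ) :
    c / (lorentzFactor a b c - c) =
      (1 + (a ^ 2 + b ^ 2)) / (2 * (lorentzFactor a b c - c) ^ 2) - 1 / 2 := by
  have hs : lorentzFactor a b c - c ≠ 0 := (sub_pos.2 (lt_lorentzFactor a b c)).ne'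
  field_simp
  linear_combination sq_lorentzFactor a b c

theorem hasDerivAt_lorentzFactor {u₁ u₂ u₃ : ℝ → ℝ} {a₁ a₂ a₃ t : ℝ}
    (h₁ : HasDerivAt u₁ a₁ t) (h₂ : HasDerivAt u₂ a₂ t) (h₃ : HasDerivAt u₃ a₃ t) :
    HasDerivAt (fun τ => lorentzFactor (u₁ τ) (u₂ τ) (u₃ τ))
      ((u₁ t * a₁ + u₂ t * a₂ + u₃ t * a₃) / lorentzFactor (u₁ t) (u₂ t) (u₃ t)) t := by
  have hsum : HasDerivAt (fun τ => 1 + (u₁ τ ^ 2 + u₂ τ ^ 2 + u₃ τ ^ 2))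
      (2 * (u₁ t * a₁ + u₂ t * a₂ + u₃ t * a₃)) t := by
    refine ((((h₁.pow 2).add (h₂.pow 2)).add (h₃.pow 2)).const_add 1).congr_deriv ?_
    ring
  refine (hsum.sqrt (by positivity)).congr_deriv ?_
  rw [mul_div_mul_left _ _ two_ne_zero]
  rfl

/-- `h₁`–`h₃` are the Lorentz equations, with `k = q / (m c)`, for the electric field
`(e₁, e₂, e₃)` and the magnetic field `e_z × (e₁, e₂, 0)`. -/
theorem hasDerivAt_lorentzFactor_sub_of_planeWave {u₁ u₂ u₃ : ℝ → ℝ} {k e₁ e₂ e₃ t : ℝ}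
    (h₁ : HasDerivAt u₁ (k * (e₁ - u₃ t * e₁ / lorentzFactor (u₁ t) (u₂ t) (u₃ t))) t)
    (h₂ : HasDerivAt u₂ (k * (e₂ - u₃ t * e₂ / lorentzFactor (u₁ t) (u₂ t) (u₃ t))) t)
    (h₃ : HasDerivAt u₃
      (k * (e₃ + (u₁ t * e₁ + u₂ t * e₂) / lorentzFactor (u₁ t) (u₂ t) (u₃ t))) t) :
    HasDerivAt (fun τ => lorentzFactor (u₁ τ) (u₂ τ) (u₃ τ) - u₃ τ)
      (-k * e₃ * (lorentzFactor (u₁ t) (u₂ t) (u₃ t) - u₃ t) /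
        lorentzFactor (u₁ t) (u₂ t) (u₃ t)) t := by
  refine ((hasDerivAt_lorentzFactor h₁ h₂ h₃).sub h₃).congr_deriv ?_
  field_simp [(lorentzFactor_pos (u₁ t) (u₂ t) (u₃ t)).ne']
  ring

theorem stmt_4_general (q m c : ℝ) (hc : 0 < c)
    (ε1 ε2 : ℝ → ℝ)
    (Ez : ℝ → ℝ → ℝ)
    (x3 u1 u2 u3 γ : ℝ → ℝ)
    (hγ : ∀ t, γ t = Real.sqrt (1 + ((u1 t) ^ 2 + (u2 t) ^ 2 + (u3 t) ^ 2)))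
    (hx3 : ∀ t, HasDerivAt x3 (c * u3 t / γ t) t)
    (hu1 : ∀ t, HasDerivAt u1
      (q / (m * c) * (ε1 (c * t - x3 t) - u3 t * ε1 (c * t - x3 t) / γ t)) t)
    (hu2 : ∀ t, HasDerivAt u2
      (q / (m * c) * (ε2 (c * t - x3 t) - u3 t * ε2 (c * t - x3 t) / γ t)) t)
    (hu3 : ∀ t, HasDerivAt u3
      (q / (m * c) * (Ez t (x3 t)
        + (u1 t * ε1 (c * t - x3 t) + u2 t * ε2 (c * t - x3 t)) / γ t)) t)
    (that : ℝ → ℝ) (hthat : ∀ t, that (c * t - x3 t) = t) :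
    ∀ t : ℝ,
      HasDerivWithinAt (fun ξ => x3 (that ξ))
        ((1 + ((u1 t) ^ 2 + (u2 t) ^ 2)) / (2 * (γ t - u3 t) ^ 2) - 1 / 2)
        (Set.range fun τ : ℝ => c * τ - x3 τ) (c * t - x3 t) ∧
      HasDerivWithinAt (fun ξ => γ (that ξ) - u3 (that ξ))
        (-(q / (m * c ^ 2)) * Ez t (x3 t))
        (Set.range fun τ : ℝ => c * τ - x3 τ) (c * t - x3 t) := by
  obtain rfl : γ = fun τ => lorentzFactor (u1 τ) (u2 τ) (u3 τ) := funext hγ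
  intro t
  rw [show q / (m * c ^ 2) = q / (m * c) / c by ring]
  generalize q / (m * c) = k at *
  have hγ_pos τ := lorentzFactor_pos (u1 τ) (u2 τ) (u3 τ)
  have hs_pos τ := sub_pos.2 (lt_lorentzFactor (u1 τ) (u2 τ) (u3 τ))
  have hξ τ : HasDerivAt (fun σ => c * σ - x3 σ)
      (c * (lorentzFactor (u1 τ) (u2 τ) (u3 τ) - u3 τ) / lorentzFactor (u1 τ) (u2 τ) (u3 τ)) τ := by
    refine (((hasDerivAt_id τ).const_mul c).sub (hx3 τ)).congr_deriv ?_
    field_simp [(hγ_pos τ).ne']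
  have hξ_pos τ := div_pos (mul_pos hc (hs_pos τ)) (hγ_pos τ)
  have hξ_mono := strictMono_of_hasDerivAt_pos hξ hξ_pos
  have hξ_cont := Differentiable.continuous fun τ => (hξ τ).differentiableAt
  have hs_deriv := hasDerivAt_lorentzFactor_sub_of_planeWave (hu1 t) (hu2 t) (hu3 t)
  constructor
  · convert (hx3 t).comp_leftInverse_range hξ_mono hξ_cont hthat (hξ t) (hξ_pos t).ne' using 1
    rw [← div_lorentzFactor_sub_self]
    field_simp [(hγ_pos t).ne', (hs_pos t).ne', hc.ne']
  · convert hs_deriv.comp_leftInverse_range hξ_mono hξ_cont hthat (hξ t) (hξ_pos t).ne' using 1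
    field_simp [(hγ_pos t).ne', (hs_pos t).ne', hc.ne']

/-- For a charge in the field of a transverse plane travelling wave plus a
longitudinal field, in the light-cone parametrization `ξ = ct - z` the reduced
variables `ẑ(ξ) = z(t̂(ξ))` and `ŝ(ξ) = γ - u_z` satisfy
`dẑ/dξ = (1 + v)/(2ŝ²) - 1/2` and `dŝ/dξ = -(q/(mc²)) E^z(t̂(ξ), ẑ(ξ))`. -/
theorem stmt_4 (q m c : ℝ) (hm : 0 < m) (hc : 0 < c)
    (ε1 ε2 : ℝ → ℝ) (hε1 : Continuous ε1) (hε2 : Continuous ε2)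
    (Ez : ℝ → ℝ → ℝ) (hEz : Continuous fun p : ℝ × ℝ => Ez p.1 p.2)
    (x1 x2 x3 u1 u2 u3 γ : ℝ → ℝ)
    (hγ : ∀ t, γ t = Real.sqrt (1 + ((u1 t) ^ 2 + (u2 t) ^ 2 + (u3 t) ^ 2)))
    (hx1 : ∀ t, HasDerivAt x1 (c * u1 t / γ t) t)
    (hx2 : ∀ t, HasDerivAt x2 (c * u2 t / γ t) t)
    (hx3 : ∀ t, HasDerivAt x3 (c * u3 t / γ t) t)
    (hu1 : ∀ t, HasDerivAt u1
      (q / (m * c) * (ε1 (c * t - x3 t) - u3 t * ε1 (c * t - x3 t) / γ t)) t)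
    (hu2 : ∀ t, HasDerivAt u2
      (q / (m * c) * (ε2 (c * t - x3 t) - u3 t * ε2 (c * t - x3 t) / γ t)) t)
    (hu3 : ∀ t, HasDerivAt u3
      (q / (m * c) * (Ez t (x3 t)
        + (u1 t * ε1 (c * t - x3 t) + u2 t * ε2 (c * t - x3 t)) / γ t)) t)
    (that : ℝ → ℝ) (hthat : ∀ t, that (c * t - x3 t) = t) :
    ∀ t : ℝ,
      HasDerivWithinAt (fun ξ => x3 (that ξ))
        ((1 + ((u1 t) ^ 2 + (u2 t) ^ 2)) / (2 * (γ t - u3 t) ^ 2) - 1 / 2)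
        (Set.range fun τ : ℝ => c * τ - x3 τ) (c * t - x3 t) ∧
      HasDerivWithinAt (fun ξ => γ (that ξ) - u3 (that ξ))
        (-(q / (m * c ^ 2)) * Ez t (x3 t))
        (Set.range fun τ : ℝ => c * τ - x3 τ) (c * t - x3 t) :=
  stmt_4_general q m c hc ε1 ε2 Ez x3 u1 u2 u3 γ hγ hx3 hu1 hu2 hu3 that hthat
end

section
/- Let I ⊂ ℝ be an open interval, l ∈ ℝ, ẑ_e : (l, ∞) × I → ℝ be C¹, and ξ_H : I → (0, ∞) be C¹. Suppose ẑ_e(ξ + ξ_H(Z), Z) = ẑ_e(ξ, Z) for all ξ > l and Z ∈ I. Then, with Ĵ := ∂ẑ_e/∂Z and ẑ_e' := ∂ẑ_e/∂ξ, for every k ∈ ℕ, ξ > l and Z ∈ I: Ĵ(ξ + k ξ_H(Z), Z) = Ĵ(ξ, Z) − k (dξ_H/dZ)(Z) ẑ_e'(ξ, Z). -/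
/-! Differentiate the identity `ẑ_e(ξ + k ξ_H(Z), Z) = ẑ_e(ξ, Z)`, valid for all `Z` near a given
point, in `Z`: the chain rule produces `Ĵ(ξ + k ξ_H, Z) + k ξ_H'(Z) ẑ_e'(ξ + k ξ_H, Z)`, and
`ẑ_e'` is itself `ξ_H(Z)`-periodic in `ξ`, so the last factor is `ẑ_e'(ξ, Z)`. -/

open Filter Topology Set

theorem add_nat_mul_eq_of_forall_add_eq {α : Type*} {f : ℝ → α} {l p : ℝ} (hp : 0 ≤ p)
    (hf : ∀ x ∈ Ioi l, f (x + p) = f x) (k : ℕ) : ∀ x ∈ Ioi l, f (x + k * p) = f x := by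
  induction k with
  | zero => simp
  | succ k ih =>
    intro x hx
    have hxp : x + p ∈ Ioi l := by simp only [mem_Ioi] at hx ⊢; linarith
    calc f (x + (k + 1 : ℕ) * p) = f ((x + p) + k * p) := by push_cast; ring_nf
      _ = f x := by rw [ih _ hxp, hf x hx]

section Deriv

variable {𝕜 : Type*} [NontriviallyNormedField 𝕜] {E : Type*} [NormedAddCommGroup E]
  [NormedSpace 𝕜 E]

theorem hasDerivAt_comp_of_differentiableAt_uncurry {F : 𝕜 → 𝕜 → E} {g : 𝕜 → 𝕜} {g' z : 𝕜}
    (hF : DifferentiableAt 𝕜 (Function.uncurry F) (g z, z)) (hg : HasDerivAt g g' z) :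
    HasDerivAt (fun z' => F (g z') z')
      (g' • deriv (fun x => F x z) (g z) + deriv (F (g z)) z) z := by
  have hD := hF.hasFDerivAt
  set D := fderiv 𝕜 (Function.uncurry F) (g z, z)
  have hx : HasDerivAt (fun x => F x z) (D (1, 0)) (g z) :=
    hD.comp_hasDerivAt (f := fun x => (x, z)) (g z)
      ((hasDerivAt_id' (g z)).prodMk (hasDerivAt_const (g z) z))
  have hy : HasDerivAt (F (g z)) (D (0, 1)) z :=
    hD.comp_hasDerivAt (f := fun y => (g z, y)) z
      ((hasDerivAt_const z (g z)).prodMk (hasDerivAt_id' z))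
  have hsplit : ((g', 1) : 𝕜 × 𝕜) = g' • ((1 : 𝕜), (0 : 𝕜)) + ((0 : 𝕜), (1 : 𝕜)) := by
    simp
  have hcomp : HasDerivAt (fun z' => F (g z') z') (D (g', 1)) z :=
    hD.comp_hasDerivAt (f := fun y => (g y, y)) z (hg.prodMk (hasDerivAt_id' z))
  rwa [hsplit, map_add, map_smul, ← hx.deriv, ← hy.deriv] at hcomp

theorem deriv_add_eq_of_eventually_add_eq {f : 𝕜 → E} {x c : 𝕜}
    (h : (fun y => f (y + c)) =ᶠ[𝓝 x] f) : deriv f (x + c) = deriv f x := by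
  rw [← deriv_comp_add_const]
  exact h.deriv_eq

end Deriv

theorem stmt_11_general (I : Set ℝ) (hIopen : IsOpen I) (l : ℝ)
    (ze : ℝ → ℝ → ℝ) (ξH : ℝ → ℝ)
    (hze : ContDiffOn ℝ 1 (fun p : ℝ × ℝ => ze p.1 p.2) (Set.Ioi l ×ˢ I))
    (hξH : ContDiffOn ℝ 1 ξH I)
    (hξHpos : ∀ Z ∈ I, 0 < ξH Z)
    (hper : ∀ ξ ∈ Set.Ioi l, ∀ Z ∈ I, ze (ξ + ξH Z) Z = ze ξ Z) :
    ∀ k : ℕ, ∀ ξ ∈ Set.Ioi l, ∀ Z ∈ I,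
      deriv (fun Z' => ze (ξ + k * ξH Z) Z') Z
        = deriv (fun Z' => ze ξ Z') Z - k * deriv ξH Z * deriv (fun η => ze η Z) ξ := by
  intro k ξ hξ Z hZ
  have hperk : ∀ Z' ∈ I, ∀ η ∈ Ioi l, ze (η + k * ξH Z') Z' = ze η Z' := fun Z' hZ' =>
    add_nat_mul_eq_of_forall_add_eq (f := fun η => ze η Z') (hξHpos Z' hZ').le
      (fun η hη => hper η hη Z' hZ') k
  have hshifted : ξ + k * ξH Z ∈ Ioi l := by
    have : 0 ≤ (k : ℝ) * ξH Z := mul_nonneg k.cast_nonneg (hξHpos Z hZ).le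
    simp only [mem_Ioi] at hξ ⊢
    linarith
  have hzeDiff : DifferentiableAt ℝ (Function.uncurry ze) (ξ + k * ξH Z, Z) :=
    (hze.differentiableOn one_ne_zero _ ⟨hshifted, hZ⟩).differentiableAt
      ((isOpen_Ioi.prod hIopen).mem_nhds ⟨hshifted, hZ⟩)
  have hξHDiff : HasDerivAt ξH (deriv ξH Z) Z :=
    ((hξH.differentiableOn one_ne_zero Z hZ).differentiableAt (hIopen.mem_nhds hZ)).hasDerivAt
  have hchain := hasDerivAt_comp_of_differentiableAt_uncurry hzeDiff
    ((hξHDiff.const_mul (k : ℝ)).const_add ξ)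
  have hJ : deriv (fun Z' => ze ξ Z') Z
      = k * deriv ξH Z * deriv (fun η => ze η Z) (ξ + k * ξH Z)
        + deriv (fun Z' => ze (ξ + k * ξH Z) Z') Z := by
    have hlocal : (fun Z' => ze ξ Z') =ᶠ[𝓝 Z] fun Z' => ze (ξ + k * ξH Z') Z' := by
      filter_upwards [hIopen.mem_nhds hZ] with Z' hZ' using (hperk Z' hZ' ξ hξ).symm
    rw [hlocal.deriv_eq, hchain.deriv, smul_eq_mul]
  have hze' : deriv (fun η => ze η Z) (ξ + k * ξH Z) = deriv (fun η => ze η Z) ξ := by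
    refine deriv_add_eq_of_eventually_add_eq ?_
    filter_upwards [isOpen_Ioi.mem_nhds hξ] with η hη using hperk Z hZ η hη
  rw [hJ, hze']
  ring

/-- If `ẑ_e(ξ+ξ_H(Z), Z) = ẑ_e(ξ, Z)` (periodicity with `Z`-dependent period),
then for every `k ∈ ℕ`:
`Ĵ(ξ + k ξ_H(Z), Z) = Ĵ(ξ,Z) - k (dξ_H/dZ)(Z) ẑ_e'(ξ,Z)`. -/
theorem stmt_11 (I : Set ℝ) (hIopen : IsOpen I) (hIconn : I.OrdConnected) (l : ℝ)
    (ze : ℝ → ℝ → ℝ) (ξH : ℝ → ℝ)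
    (hze : ContDiffOn ℝ 1 (fun p : ℝ × ℝ => ze p.1 p.2) (Set.Ioi l ×ˢ I))
    (hξH : ContDiffOn ℝ 1 ξH I)
    (hξHpos : ∀ Z ∈ I, 0 < ξH Z)
    (hper : ∀ ξ ∈ Set.Ioi l, ∀ Z ∈ I, ze (ξ + ξH Z) Z = ze ξ Z) :
    ∀ k : ℕ, ∀ ξ ∈ Set.Ioi l, ∀ Z ∈ I,
      deriv (fun Z' => ze (ξ + k * ξH Z) Z') Z
        = deriv (fun Z' => ze ξ Z') Z - k * deriv ξH Z * deriv (fun η => ze η Z) ξ :=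
  stmt_11_general I hIopen l ze ξH hze hξH hξHpos hper
end

section
/- Let I ⊂ ℝ be an open interval, l ∈ ℝ, ẑ_e : (l, ∞) × I → ℝ be C¹, and ξ_H : I → (0, ∞) be C¹, with ẑ_e(ξ + ξ_H(Z), Z) = ẑ_e(ξ, Z) for all ξ > l, Z ∈ I. Set Δ̂(ξ, Z) := ẑ_e(ξ, Z) − Z, Δ̂' := ∂Δ̂/∂ξ, Ĵ := ∂ẑ_e/∂Z, and define b(ξ, Z) := −Δ̂'(ξ, Z) (d/dZ)(log ξ_H)(Z) and a(ξ, Z) := Ĵ(ξ, Z) − ξ b(ξ, Z). Then Ĵ(ξ, Z) = a(ξ, Z) + ξ b(ξ, Z), both a and b are ξ_H(Z)-periodic in ξ, and b has zero mean over a period: ∫_ξ^{ξ+ξ_H(Z)} b(η, Z) dη = 0 for all ξ > l, Z ∈ I. -/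
/-!
The periodicity of `b` is that of `∂_ξ ẑ_e`, and its zero mean is the fundamental theorem of
calculus applied to the periodic function `ξ ↦ Δ̂(ξ, Z)`. For `a`, differentiate the identity
`ẑ_e(ξ + ξ_H(Z), Z) = ẑ_e(ξ, Z)` in `Z`: this gives
`Ĵ(ξ + ξ_H, Z) - Ĵ(ξ, Z) = -ξ_H'(Z) ∂_ξ ẑ_e(ξ, Z) = ξ_H(Z) b(ξ, Z)`,
which is exactly the growth of `ξ b` over one period.
-/

open Set Filter Topology

section

variable {𝕜 E : Type*} [NontriviallyNormedField 𝕜] [NormedAddCommGroup E] [NormedSpace 𝕜 E]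

theorem deriv_add_period_eq {f : 𝕜 → E} {x T : 𝕜} (hper : (fun y => f (y + T)) =ᶠ[𝓝 x] f) :
    deriv f (x + T) = deriv f x := by
  rw [← deriv_comp_add_const]
  exact hper.deriv_eq

theorem HasFDerivAt.hasDerivAt_uncurry_comp {f : 𝕜 → 𝕜 → E} {L : 𝕜 × 𝕜 →L[𝕜] E}
    {u v : 𝕜 → 𝕜} {u' v' t : 𝕜} (hf : HasFDerivAt (fun p : 𝕜 × 𝕜 => f p.1 p.2) L (u t, v t))
    (hu : HasDerivAt u u' t) (hv : HasDerivAt v v' t) :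
    HasDerivAt (fun s => f (u s) (v s)) (L (u', v')) t :=
  hf.comp_hasDerivAt (f := fun s => (u s, v s)) t (hu.prodMk hv)

theorem deriv_right_add_deriv_smul_deriv_left_of_periodic {f : 𝕜 → 𝕜 → E} {g : 𝕜 → 𝕜}
    {x y : 𝕜} (hf : DifferentiableAt 𝕜 (fun p : 𝕜 × 𝕜 => f p.1 p.2) (x + g y, y))
    (hg : DifferentiableAt 𝕜 g y) (hper : (fun y' => f (x + g y') y') =ᶠ[𝓝 y] fun y' => f x y') :
    deriv (fun y' => f (x + g y) y') y + deriv g y • deriv (fun x' => f x' y) (x + g y)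
      = deriv (fun y' => f x y') y := by
  set L := fderiv 𝕜 (fun p : 𝕜 × 𝕜 => f p.1 p.2) (x + g y, y)
  have hL : HasFDerivAt _ L (x + g y, y) := hf.hasFDerivAt
  have hleft : HasDerivAt (fun x' => f x' y) (L (1, 0)) (x + g y) :=
    hL.hasDerivAt_uncurry_comp (u := id) (v := fun _ => y) (hasDerivAt_id _) (hasDerivAt_const _ _)
  have hright : HasDerivAt (fun y' => f (x + g y) y') (L (0, 1)) y :=
    hL.hasDerivAt_uncurry_comp (u := fun _ => x + g y) (v := id) (hasDerivAt_const _ _)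
      (hasDerivAt_id _)
  have hcurve : HasDerivAt (fun y' => f (x + g y') y') (L (deriv g y, 1)) y :=
    hL.hasDerivAt_uncurry_comp (u := fun y' => x + g y') (v := id)
      (hg.hasDerivAt.const_add x) (hasDerivAt_id _)
  have hsplit : ((deriv g y, 1) : 𝕜 × 𝕜) = (0, 1) + deriv g y • (1, 0) := by simp
  rw [hleft.deriv, hright.deriv, ← hper.deriv_eq, hcurve.deriv, hsplit, map_add, map_smul]

theorem ContDiffOn.comp_prodMk_const {n : WithTop ℕ∞} {f : 𝕜 → 𝕜 → E} {s t : Set 𝕜}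
    (hf : ContDiffOn 𝕜 n (fun p : 𝕜 × 𝕜 => f p.1 p.2) (s ×ˢ t)) {y : 𝕜} (hy : y ∈ t) :
    ContDiffOn 𝕜 n (fun x => f x y) s :=
  hf.comp (contDiffOn_id.prodMk contDiffOn_const) fun _ hx => ⟨hx, hy⟩

end

theorem integral_deriv_eq_zero_of_periodic {E : Type*} [NormedAddCommGroup E]
    [NormedSpace ℝ E] [CompleteSpace E] {f : ℝ → E} {s : Set ℝ} (hs : IsOpen s)
    (hf : ContDiffOn ℝ 1 f s) {a T : ℝ} (hsub : uIcc a (a + T) ⊆ s) (hper : f (a + T) = f a) :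
    ∫ x in a..a + T, deriv f x = 0 := by
  rw [intervalIntegral.integral_deriv_eq_sub' f rfl
      (fun x hx => (hf.differentiableOn one_ne_zero).differentiableAt (hs.mem_nhds (hsub hx)))
      ((hf.continuousOn_deriv_of_isOpen hs le_rfl).mono hsub), hper, sub_self]

theorem stmt_12_general (I : Set ℝ) (hIopen : IsOpen I) (l : ℝ)
    (ze : ℝ → ℝ → ℝ) (ξH : ℝ → ℝ)
    (hze : ContDiffOn ℝ 1 (fun p : ℝ × ℝ => ze p.1 p.2) (Set.Ioi l ×ˢ I))
    (hξH : ContDiffOn ℝ 1 ξH I)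
    (hξHpos : ∀ Z ∈ I, 0 < ξH Z)
    (hper : ∀ ξ ∈ Set.Ioi l, ∀ Z ∈ I, ze (ξ + ξH Z) Z = ze ξ Z)
    (a b : ℝ → ℝ → ℝ)
    (hb : ∀ ξ Z : ℝ, b ξ Z
      = -(deriv (fun η => ze η Z - Z) ξ) * deriv (fun Z' => Real.log (ξH Z')) Z)
    (ha : ∀ ξ Z : ℝ, a ξ Z = deriv (fun Z' => ze ξ Z') Z - ξ * b ξ Z) :
    (∀ ξ ∈ Set.Ioi l, ∀ Z ∈ I,
      deriv (fun Z' => ze ξ Z') Z = a ξ Z + ξ * b ξ Z) ∧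
    (∀ ξ ∈ Set.Ioi l, ∀ Z ∈ I, a (ξ + ξH Z) Z = a ξ Z ∧ b (ξ + ξH Z) Z = b ξ Z) ∧
    (∀ ξ ∈ Set.Ioi l, ∀ Z ∈ I, (∫ η in ξ..(ξ + ξH Z), b η Z) = 0) := by
  have hU : IsOpen (Ioi l ×ˢ I) := isOpen_Ioi.prod hIopen
  have hΔ' : ∀ ξ ∈ Ioi l, ∀ Z ∈ I,
      deriv (fun η => ze η Z - Z) (ξ + ξH Z) = deriv (fun η => ze η Z - Z) ξ :=
    fun ξ hξ Z hZ => deriv_add_period_eq <| (isOpen_Ioi.eventually_mem hξ).mono fun η hη =>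
      congrArg (· - Z) (hper η hη Z hZ)
  have hbper : ∀ ξ ∈ Ioi l, ∀ Z ∈ I, b (ξ + ξH Z) Z = b ξ Z := fun ξ hξ Z hZ => by
    rw [hb, hb, hΔ' ξ hξ Z hZ]
  refine ⟨fun ξ _ Z _ => by rw [ha]; ring, fun ξ hξ Z hZ => ⟨?_, hbper ξ hξ Z hZ⟩,
    fun ξ hξ Z hZ => ?_⟩
  · have hξHne := (hξHpos Z hZ).ne'
    have hξH' := (hξH.differentiableOn one_ne_zero).differentiableAt (hIopen.mem_nhds hZ)
    have hJ := deriv_right_add_deriv_smul_deriv_left_of_periodic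
      ((hze.differentiableOn one_ne_zero).differentiableAt
        (hU.mem_nhds ⟨lt_add_of_lt_of_pos hξ (hξHpos Z hZ), hZ⟩)) hξH'
      ((hIopen.eventually_mem hZ).mono fun Z' hZ' => hper ξ hξ Z' hZ')
    have hΔξ := hΔ' ξ hξ Z hZ
    simp only [deriv_sub_const, smul_eq_mul] at hJ hΔξ
    rw [hΔξ] at hJ
    rw [ha, ha, hbper ξ hξ Z hZ, hb, (hξH'.hasDerivAt.log hξHne).deriv, deriv_sub_const]
    field_simp
    linear_combination ξH Z * hJ
  · have hsub : uIcc ξ (ξ + ξH Z) ⊆ Ioi l := by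
      rw [uIcc_of_le (le_add_of_nonneg_right (hξHpos Z hZ).le)]
      exact fun η hη => lt_of_lt_of_le hξ hη.1
    simp only [hb]
    rw [intervalIntegral.integral_mul_const, intervalIntegral.integral_neg,
      integral_deriv_eq_zero_of_periodic isOpen_Ioi
        ((hze.comp_prodMk_const hZ).sub contDiffOn_const) hsub (by rw [hper ξ hξ Z hZ]),
      neg_zero, zero_mul]

/-- With `b := -Δ̂' (d/dZ)(log ξ_H)` and `a := Ĵ - ξ b`, one has `Ĵ = a + ξ b`,
`a` and `b` are `ξ_H(Z)`-periodic in `ξ`, and `b` has zero mean over a period. -/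
theorem stmt_12 (I : Set ℝ) (hIopen : IsOpen I) (hIconn : I.OrdConnected) (l : ℝ)
    (ze : ℝ → ℝ → ℝ) (ξH : ℝ → ℝ)
    (hze : ContDiffOn ℝ 1 (fun p : ℝ × ℝ => ze p.1 p.2) (Set.Ioi l ×ˢ I))
    (hξH : ContDiffOn ℝ 1 ξH I)
    (hξHpos : ∀ Z ∈ I, 0 < ξH Z)
    (hper : ∀ ξ ∈ Set.Ioi l, ∀ Z ∈ I, ze (ξ + ξH Z) Z = ze ξ Z)
    (a b : ℝ → ℝ → ℝ)
    (hb : ∀ ξ Z : ℝ, b ξ Z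
      = -(deriv (fun η => ze η Z - Z) ξ) * deriv (fun Z' => Real.log (ξH Z')) Z)
    (ha : ∀ ξ Z : ℝ, a ξ Z = deriv (fun Z' => ze ξ Z') Z - ξ * b ξ Z) :
    (∀ ξ ∈ Set.Ioi l, ∀ Z ∈ I,
      deriv (fun Z' => ze ξ Z') Z = a ξ Z + ξ * b ξ Z) ∧
    (∀ ξ ∈ Set.Ioi l, ∀ Z ∈ I, a (ξ + ξH Z) Z = a ξ Z ∧ b (ξ + ξH Z) Z = b ξ Z) ∧
    (∀ ξ ∈ Set.Ioi l, ∀ Z ∈ I, (∫ η in ξ..(ξ + ξH Z), b η Z) = 0) :=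
  stmt_12_general I hIopen l ze ξH hze hξH hξHpos hper a b hb ha
end

section
/- Let M > 0 and consider the autonomous planar system Δ' = 1/(2s²) − 1/2, s' = M Δ on the half-plane {s > 0}, with conserved energy H(Δ, s) = (s² + 1)/(2s) + M Δ²/2. Let (Δ(ξ), s(ξ)) be a maximal solution with energy h := H(Δ(ξ₁), s(ξ₁)) > 1 at some ξ₁. Then the solution is defined for all ξ ∈ ℝ and is periodic, with period ξ_H = 2 ∫_{−Δ_M}^{Δ_M} γ̆(Δ)/√(γ̆(Δ)² − 1) dΔ, where γ̆(Δ) := h − M Δ²/2 and Δ_M := √(2(h − 1)/M). -/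
/-!
Energy conservation confines a solution to its level set `{H = h}`, which is compact and stays
away from `s = 0`. Outside a neighbourhood of the level set the vector field can be replaced by a
bounded Lipschitz one; this gives a global solution, and uniqueness identifies it with the given
one on `J`.

Reflection `ξ ↦ 2a - ξ`, `Δ ↦ -Δ` about a zero `a` of `Δ` maps solutions to solutions, so two
zeros `a < b` of `Δ` make the solution `2 (b - a)`-periodic. Zeros keep occurring, since away
from them `Δ'` and `s'` have definite signs that a bounded orbit cannot sustain. On an arc
between consecutive zeros with `Δ > 0`, `s` increases through `1`, and on either side of `s = 1`
the elapsed time is `∫ dΔ / Δ'` with `1 / Δ' = ± γ̆ / √(γ̆² - 1) - 1` along the orbit; the two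
quarter-arcs add up to `∫_{-Δ_M}^{Δ_M} γ̆ / √(γ̆² - 1)`.
-/

open Set Filter Topology MeasureTheory intervalIntegral
open scoped NNReal

theorem exists_forall_hasDerivAt_of_lipschitzWith {E : Type*} [NormedAddCommGroup E]
    [NormedSpace ℝ E] [CompleteSpace E] {F : E → E} {K : ℝ≥0} {C : ℝ}
    (hF : LipschitzWith K F) (hC : ∀ x, ‖F x‖ ≤ C) (t₀ : ℝ) (x₀ : E) :
    ∃ f : ℝ → E, f t₀ = x₀ ∧ ∀ t, HasDerivAt f (F (f t)) t := by
  have hC₀ : 0 ≤ C := (norm_nonneg _).trans (hC x₀)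
  have hloc : ∀ r : ℝ, 0 < r → ∃ f : ℝ → E, f t₀ = x₀ ∧
      ∀ t ∈ Ioo (t₀ - r) (t₀ + r), HasDerivAt f (F (f t)) t := by
    intro r hr
    have ht₀ : t₀ ∈ Icc (t₀ - r) (t₀ + r) := ⟨by linarith, by linarith⟩
    have hpl : IsPicardLindelof (fun _ => F) ⟨t₀, ht₀⟩ x₀ ⟨C * r, by positivity⟩ 0 ⟨C, hC₀⟩ K :=
      { lipschitzOnWith := fun _ _ => hF.lipschitzOnWith
        continuousOn := fun _ _ => continuousOn_const
        norm_le := fun _ _ x _ => hC x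
        mul_max_le := by simp; exact le_rfl }
    obtain ⟨f, hf₀, hf⟩ := hpl.exists_eq_forall_mem_Icc_hasDerivWithinAt₀
    exact ⟨f, hf₀, fun t ht =>
      (hf t (Ioo_subset_Icc_self ht)).hasDerivAt (Icc_mem_nhds ht.1 ht.2)⟩
  choose! f hf₀ hf using hloc
  have hagree : ∀ r r' : ℝ, 0 < r → r ≤ r' → EqOn (f r) (f r') (Ioo (t₀ - r) (t₀ + r)) :=
    fun r r' hr hrr' => ODE_solution_unique_of_mem_Ioo (v := fun _ => F) (s := fun _ => univ)
      (fun _ _ => hF.lipschitzOnWith) ⟨by linarith, by linarith⟩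
      (fun t ht => ⟨hf r hr t ht, trivial⟩)
      (fun t ht => ⟨hf r' (by linarith) t ⟨by linarith [ht.1], by linarith [ht.2]⟩, trivial⟩)
      ((hf₀ r hr).trans (hf₀ r' (by linarith)).symm)
  -- the solution on `Ioo (t₀ - r) (t₀ + r)` with `r = |t - t₀| + 1` is used at time `t`
  have hmem : ∀ t, t ∈ Ioo (t₀ - (|t - t₀| + 1)) (t₀ + (|t - t₀| + 1)) := fun t => by
    constructor <;> cases abs_cases (t - t₀) <;> linarith
  refine ⟨fun t => f (|t - t₀| + 1) t, by simpa using hf₀ 1 one_pos, fun t => ?_⟩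
  have hr : 0 < |t - t₀| + 2 := by positivity
  have heq : (fun u => f (|u - t₀| + 1) u) =ᶠ[𝓝 t] f (|t - t₀| + 2) := by
    filter_upwards [Metric.ball_mem_nhds t one_pos] with u hu
    rw [Metric.mem_ball, Real.dist_eq] at hu
    exact hagree _ _ (by positivity)
      (by linarith [abs_sub_le u t t₀]) (hmem u)
  show HasDerivAt _ (F (f (|t - t₀| + 1) t)) t
  rw [heq.eq_of_nhds]
  exact (hf _ hr t ⟨by linarith [(hmem t).1], by linarith [(hmem t).2]⟩).congr_of_eventuallyEq heq

theorem eqOn_of_hasDerivAt_of_ordConnected {E : Type*} [NormedAddCommGroup E]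
    [NormedSpace ℝ E] {F : E → E} {K : ℝ≥0} (hF : LipschitzWith K F) {J : Set ℝ}
    (hJ : J.OrdConnected) {f g : ℝ → E} (hf : ∀ t ∈ J, HasDerivAt f (F (f t)) t)
    (hg : ∀ t ∈ J, HasDerivAt g (F (g t)) t) {t₀ : ℝ} (ht₀ : t₀ ∈ J) (heq : f t₀ = g t₀) :
    EqOn f g J := by
  intro t ht
  rcases le_total t₀ t with h | h
  · have hsub := hJ.out ht₀ ht
    exact ODE_solution_unique_of_mem_Icc_right (v := fun _ => F) (s := fun _ => univ)
      (fun _ _ => hF.lipschitzOnWith) (HasDerivAt.continuousOn fun u hu => hf u (hsub hu))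
      (fun u hu => (hf u (hsub (Ico_subset_Icc_self hu))).hasDerivWithinAt) (fun _ _ => trivial)
      (HasDerivAt.continuousOn fun u hu => hg u (hsub hu))
      (fun u hu => (hg u (hsub (Ico_subset_Icc_self hu))).hasDerivWithinAt) (fun _ _ => trivial)
      heq ⟨h, le_rfl⟩
  · have hsub := hJ.out ht ht₀
    exact ODE_solution_unique_of_mem_Icc_left (v := fun _ => F) (s := fun _ => univ)
      (fun _ _ => hF.lipschitzOnWith) (HasDerivAt.continuousOn fun u hu => hf u (hsub hu))
      (fun u hu => (hf u (hsub (Ioc_subset_Icc_self hu))).hasDerivWithinAt) (fun _ _ => trivial)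
      (HasDerivAt.continuousOn fun u hu => hg u (hsub hu))
      (fun u hu => (hg u (hsub (Ioc_subset_Icc_self hu))).hasDerivWithinAt) (fun _ _ => trivial)
      heq ⟨le_rfl, h⟩

theorem eq_of_hasDerivAt_zero_of_ordConnected {φ : ℝ → ℝ} {J : Set ℝ} (hJ : J.OrdConnected)
    (hφ : ∀ t ∈ J, HasDerivAt φ 0 t) {a b : ℝ} (ha : a ∈ J) (hb : b ∈ J) : φ a = φ b := by
  wlog hab : a ≤ b generalizing a b
  · exact (this hb ha (le_of_not_ge hab)).symm
  have hsub := hJ.out ha hb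
  exact (constant_of_has_deriv_right_zero (HasDerivAt.continuousOn fun t ht => hφ t (hsub ht))
    (fun t ht => (hφ t (hsub (Ico_subset_Icc_self ht))).hasDerivWithinAt) b ⟨hab, le_rfl⟩).symm

theorem forall_mem_of_eventually_mem {X : Type*} [TopologicalSpace X] {f : ℝ → X}
    (hf : Continuous f) {S : Set X} (hS : IsClosed S)
    (hloc : ∀ t, f t ∈ S → ∀ᶠ u in 𝓝 t, f u ∈ S) {t₀ : ℝ} (h₀ : f t₀ ∈ S) (t : ℝ) :
    f t ∈ S := by
  have hclopen : IsClopen (f ⁻¹' S) := ⟨hS.preimage hf, isOpen_iff_mem_nhds.2 hloc⟩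
  rw [← mem_preimage, hclopen.eq_univ ⟨t₀, h₀⟩]
  trivial

theorem exists_lt_of_le_hasDerivAt {φ φ' : ℝ → ℝ} {T c : ℝ} (hc : 0 < c)
    (hφ : ∀ t ∈ Ici T, HasDerivAt φ (φ' t) t) (hφ' : ∀ t ∈ Ici T, c ≤ φ' t) (B : ℝ) :
    ∃ t ∈ Ici T, B < φ t := by
  have hgrowth := (convex_Ici T).mul_sub_le_image_sub_of_le_deriv
    (HasDerivAt.continuousOn hφ)
    (fun t ht => (hφ t (interior_subset ht)).differentiableAt.differentiableWithinAt)
    (fun t ht => (hφ t (interior_subset ht)).deriv ▸ hφ' t (interior_subset ht))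
  set t := T + |B - φ T| / c + 1
  have hTt : T ≤ t := by
    have : 0 ≤ |B - φ T| / c := by positivity
    linarith
  have hct : c * (t - T) = |B - φ T| + c := by
    simp only [t]
    field_simp
    ring
  exact ⟨t, hTt, by linarith [hgrowth T (mem_Ici.2 le_rfl) t hTt hTt, le_abs_self (B - φ T)]⟩

theorem IsPreconnected.pos_of_ne_zero {f : ℝ → ℝ} {s : Set ℝ} (hs : IsPreconnected s)
    (hf : ContinuousOn f s) (hne : ∀ x ∈ s, f x ≠ 0) {a b : ℝ} (ha : a ∈ s) (hb : b ∈ s)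
    (hfa : 0 < f a) : 0 < f b := by
  by_contra! hfb
  obtain ⟨c, hc, hc0⟩ := hs.intermediate_value hb ha hf ⟨hfb, hfa.le⟩
  exact hne c hc hc0

theorem monotoneOn_of_hasDerivAt_nonneg {f f' : ℝ → ℝ} {D : Set ℝ} (hD : Convex ℝ D)
    (hf : ∀ x, HasDerivAt f (f' x) x) (hf' : ∀ x ∈ interior D, 0 ≤ f' x) : MonotoneOn f D :=
  monotoneOn_of_hasDerivWithinAt_nonneg hD (HasDerivAt.continuousOn fun x _ => hf x)
    (fun x _ => (hf x).hasDerivWithinAt) hf'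

theorem strictMonoOn_of_hasDerivAt_pos {f f' : ℝ → ℝ} {D : Set ℝ} (hD : Convex ℝ D)
    (hf : ∀ x, HasDerivAt f (f' x) x) (hf' : ∀ x ∈ interior D, 0 < f' x) : StrictMonoOn f D :=
  strictMonoOn_of_hasDerivWithinAt_pos hD (HasDerivAt.continuousOn fun x _ => hf x)
    (fun x _ => (hf x).hasDerivWithinAt) hf'

theorem integral_eq_sub_of_mul_hasDerivAt_eq_one {x x' g : ℝ → ℝ} {a b : ℝ} (hab : a ≤ b)
    (hx : ContinuousOn x (Icc a b)) (hx' : ∀ t ∈ Ioo a b, HasDerivAt x (x' t) t)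
    (hmaps : MapsTo x (Ioo a b) (uIoo (x a) (x b)))
    (hg : ContinuousOn g (uIoo (x a) (x b))) (hint : IntervalIntegrable g volume (x a) (x b))
    (hone : ∀ t ∈ Ioo a b, g (x t) * x' t = 1) :
    ∫ y in x a..x b, g y = b - a := by
  have hG : ContinuousOn (fun y => ∫ u in x a..y, g u) (uIcc (x a) (x b)) :=
    continuousOn_primitive_interval' hint left_mem_uIcc
  have hG' : ∀ y ∈ uIoo (x a) (x b), HasDerivAt (fun y => ∫ u in x a..y, g u) (g y) y :=
    fun y hy => integral_hasDerivAt_right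
      (hint.mono_set (uIcc_subset_uIcc left_mem_uIcc (uIoo_subset_uIcc_self hy)))
      (hg.stronglyMeasurableAtFilter isOpen_Ioo y hy) (hg.continuousAt (isOpen_Ioo.mem_nhds hy))
  have hmapsIcc : MapsTo x (Icc a b) (uIcc (x a) (x b)) := by
    intro t ht
    rcases eq_or_lt_of_le ht.1 with rfl | hat
    · exact left_mem_uIcc
    rcases eq_or_lt_of_le ht.2 with rfl | htb
    · exact right_mem_uIcc
    exact uIoo_subset_uIcc_self (hmaps ⟨hat, htb⟩)
  have hFTC := integral_eq_sub_of_hasDerivAt_of_le hab (hG.comp hx hmapsIcc)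
    (fun t ht => (hone t ht) ▸ (hG' _ (hmaps ht)).comp t (hx' t ht)) intervalIntegrable_const
  simpa using hFTC.symm

theorem intervalIntegrable_div_of_mul_sqrt_le {n r : ℝ → ℝ} {a b c : ℝ} (hab : a ≤ b)
    (hc : 0 < c) (hn : ContinuousOn n (Icc a b)) (hr : ContinuousOn r (Ioo a b))
    (hrc : ∀ x ∈ Ioo a b, c * √(b - x) ≤ r x) :
    IntervalIntegrable (fun x => n x / r x) volume a b := by
  obtain ⟨B, hB⟩ := isCompact_Icc.exists_bound_of_continuousOn hn
  have hB₀ : 0 ≤ B := (norm_nonneg _).trans (hB a ⟨le_rfl, hab⟩)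
  have hmajor : IntervalIntegrable (fun x => B / c * (b - x) ^ (-(1 / 2) : ℝ)) volume a b := by
    have := ((intervalIntegrable_rpow' (r := -(1 / 2)) (by norm_num)).comp_sub_left b
      (a := 0) (b := b - a)).symm.const_mul (B / c)
    simpa using this
  rw [intervalIntegrable_iff_integrableOn_Ioo_of_le hab] at hmajor ⊢
  have hrpos : ∀ x ∈ Ioo a b, 0 < r x := fun x hx =>
    (mul_pos hc (Real.sqrt_pos.2 (sub_pos.2 hx.2))).trans_le (hrc x hx)
  have hcont : ContinuousOn (fun x => n x / r x) (Ioo a b) :=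
    (hn.mono Ioo_subset_Icc_self).div hr fun x hx => (hrpos x hx).ne'
  refine hmajor.mono' (hcont.aestronglyMeasurable measurableSet_Ioo) ?_
  filter_upwards [ae_restrict_mem measurableSet_Ioo] with x hx
  have hsqrt : 0 < √(b - x) := Real.sqrt_pos.2 (sub_pos.2 hx.2)
  rw [Real.rpow_neg (sub_pos.2 hx.2).le, ← Real.sqrt_eq_rpow, Real.norm_eq_abs, abs_div,
    abs_of_pos (hrpos x hx), div_le_iff₀ (hrpos x hx)]
  calc |n x| ≤ B := by simpa using hB x (Ioo_subset_Icc_self hx)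
    _ = B / c * (√(b - x))⁻¹ * (c * √(b - x)) := by field_simp
    _ ≤ B / c * (√(b - x))⁻¹ * r x := mul_le_mul_of_nonneg_left (hrc x hx)
        (mul_nonneg (div_nonneg hB₀ hc.le) (inv_nonneg.2 hsqrt.le))

theorem integral_neg_eq_two_mul_of_even {f : ℝ → ℝ} (hf : ∀ x, f (-x) = f x) {a : ℝ}
    (hint : IntervalIntegrable f volume 0 a) :
    ∫ x in -a..a, f x = 2 * ∫ x in 0..a, f x := by
  have hint' : IntervalIntegrable f volume (-a) 0 := by
    simpa [hf] using (hint.comp_sub_left 0).symm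
  have hleft : ∫ x in -a..0, f x = ∫ x in 0..a, f x := by
    simpa [hf] using (integral_comp_neg (a := 0) (b := a) f).symm
  rw [← integral_add_adjacent_intervals hint' hint, hleft]
  ring

namespace PlasmaWave

noncomputable def gamma (s : ℝ) : ℝ := (s ^ 2 + 1) / (2 * s)

noncomputable def energy (M : ℝ) (p : ℝ × ℝ) : ℝ := gamma p.2 + M * p.1 ^ 2 / 2

noncomputable def amplitude (M h : ℝ) : ℝ := √(2 * (h - 1) / M)

def IsSolutionOn (M : ℝ) (Δ s : ℝ → ℝ) (J : Set ℝ) : Prop :=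
  ∀ ξ ∈ J, HasDerivAt Δ (1 / (2 * (s ξ) ^ 2) - 1 / 2) ξ ∧ HasDerivAt s (M * Δ ξ) ξ ∧ 0 < s ξ

theorem one_le_gamma {s : ℝ} (hs : 0 < s) : 1 ≤ gamma s := by
  rw [gamma, le_div_iff₀ (by positivity)]
  nlinarith [sq_nonneg (s - 1)]

theorem gamma_one : gamma 1 = 1 := by norm_num [gamma]

theorem eq_or_mul_eq_one_of_gamma_eq {s t : ℝ} (hs : 0 < s) (ht : 0 < t)
    (hst : gamma s = gamma t) : s = t ∨ s * t = 1 := by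
  rw [gamma, gamma, div_eq_div_iff (by positivity) (by positivity)] at hst
  have : (s - t) * (s * t - 1) = 0 := by linear_combination hst / 2
  rcases mul_eq_zero.1 this with h | h
  · exact Or.inl (by linarith)
  · exact Or.inr (by linarith)

theorem lt_and_abs_lt_of_energy_eq {M h : ℝ} (hM : 0 < M) {p : ℝ × ℝ} (hp : 0 < p.2)
    (hE : energy M p = h) : 1 / (4 * h) < p.2 ∧ |p.1| < amplitude M h + 1 := by
  have hγ := one_le_gamma hp
  have hU : 0 ≤ M * p.1 ^ 2 / 2 := by positivity
  have hγh : gamma p.2 ≤ h := by rw [← hE, energy]; linarith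
  constructor
  · rw [gamma, div_le_iff₀ (by positivity)] at hγh
    rw [div_lt_iff₀ (by nlinarith)]
    nlinarith
  · have : |p.1| ≤ amplitude M h := by
      refine Real.abs_le_sqrt ?_
      rw [le_div_iff₀ hM]
      rw [energy] at hE
      nlinarith
    linarith

theorem hasDerivAt_energy {M : ℝ} {Δ s : ℝ → ℝ} {ξ : ℝ}
    (hΔ : HasDerivAt Δ (1 / (2 * (s ξ) ^ 2) - 1 / 2) ξ) (hs : HasDerivAt s (M * Δ ξ) ξ)
    (hpos : 0 < s ξ) : HasDerivAt (fun t => energy M (Δ t, s t)) 0 ξ := by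
  have hγ := ((hs.pow 2).add_const 1).div (hs.const_mul 2) (by positivity)
  refine (hγ.add (((hΔ.pow 2).const_mul M).div_const 2)).congr_deriv ?_
  simp only [Pi.pow_apply]
  field_simp
  ring

theorem IsSolutionOn.energy_eq {M : ℝ} {Δ s : ℝ → ℝ} {J : Set ℝ} (hsol : IsSolutionOn M Δ s J)
    (hJ : J.OrdConnected) {a b : ℝ} (ha : a ∈ J) (hb : b ∈ J) :
    energy M (Δ a, s a) = energy M (Δ b, s b) :=
  eq_of_hasDerivAt_zero_of_ordConnected hJ
    (fun t ht => hasDerivAt_energy (hsol t ht).1 (hsol t ht).2.1 (hsol t ht).2.2) ha hb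

noncomputable def clampedField (M c d : ℝ) (p : ℝ × ℝ) : ℝ × ℝ :=
  (1 / (2 * max p.2 c ^ 2) - 1 / 2, M * max (-d) (min d p.1))

theorem clampedField_of_le {M c d : ℝ} {p : ℝ × ℝ} (hc : c ≤ p.2) (hd : |p.1| ≤ d) :
    clampedField M c d p = (1 / (2 * p.2 ^ 2) - 1 / 2, M * p.1) := by
  rw [abs_le] at hd
  simp [clampedField, max_eq_left hc, min_eq_right hd.2, max_eq_right hd.1]

theorem lipschitzOnWith_one_div_two_mul_sq {c : ℝ} (hc : 0 < c) :
    LipschitzOnWith (Real.toNNReal (1 / c ^ 3)) (fun u : ℝ => 1 / (2 * u ^ 2)) (Ici c) := by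
  refine (convex_Ici c).lipschitzOnWith_of_nnnorm_hasDerivWithin_le
    (f' := fun u => -(1 / u ^ 3)) (fun u hu => ?_) (fun u hu => ?_)
  · have hu : 0 < u := hc.trans_le hu
    refine (((hasDerivAt_pow 2 u).const_mul 2).inv (by positivity)).hasDerivWithinAt.congr_deriv ?_
      |>.congr (fun _ _ => one_div _) (one_div _)
    field_simp
    ring
  · have hu₀ : 0 < u := hc.trans_le hu
    rw [← NNReal.coe_le_coe, coe_nnnorm, Real.coe_toNNReal _ (by positivity), norm_neg,
      Real.norm_of_nonneg (by positivity)]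
    gcongr
    exact hu

theorem lipschitzWith_clampedField {M c d : ℝ} (hc : 0 < c) :
    ∃ K, LipschitzWith K (clampedField M c d) := by
  have hfst : LipschitzWith (Real.toNNReal (1 / c ^ 3)) fun u : ℝ => 1 / (2 * max u c ^ 2) := by
    rw [← lipschitzOnWith_univ, ← mul_one (Real.toNNReal _)]
    exact (lipschitzOnWith_one_div_two_mul_sq hc).comp
      ((LipschitzWith.id.max_const c).lipschitzOnWith (s := univ)) (fun u _ => le_max_right u c)
  have hsnd : LipschitzWith 1 fun u : ℝ => max (-d) (min d u) :=
    (LipschitzWith.id.const_min d).const_max (-d)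
  exact ⟨_, ((hfst.comp LipschitzWith.prod_snd).sub (LipschitzWith.const (1 / 2))).prodMk
    ((lipschitzWith_smul M).comp (hsnd.comp LipschitzWith.prod_fst))⟩

theorem norm_clampedField_le {M c d : ℝ} (hc : 0 < c) (hd : 0 ≤ d) (p : ℝ × ℝ) :
    ‖clampedField M c d p‖ ≤ 1 / (2 * c ^ 2) + 1 / 2 + |M| * d := by
  have h₁ : 1 / (2 * max p.2 c ^ 2) ≤ 1 / (2 * c ^ 2) := by
    gcongr
    exact le_max_right _ _
  have h₁' : 0 < 1 / (2 * max p.2 c ^ 2) := by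
    have : 0 < max p.2 c := hc.trans_le (le_max_right _ _)
    positivity
  have h₂ : |max (-d) (min d p.1)| ≤ d :=
    abs_le.2 ⟨le_max_left _ _, max_le (by linarith) (min_le_left _ _)⟩
  rw [Prod.norm_def, Real.norm_eq_abs, Real.norm_eq_abs, clampedField, abs_mul]
  refine max_le ?_ ?_
  · rw [abs_le]
    constructor <;> nlinarith [abs_nonneg M]
  · nlinarith [abs_nonneg M, abs_nonneg (max (-d) (min d p.1))]

theorem hasDerivAt_prodMk_clampedField {M c d : ℝ} {Δ s : ℝ → ℝ} {ξ : ℝ}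
    (hΔ : HasDerivAt Δ (1 / (2 * s ξ ^ 2) - 1 / 2) ξ) (hs : HasDerivAt s (M * Δ ξ) ξ)
    (hc : c ≤ s ξ) (hd : |Δ ξ| ≤ d) :
    HasDerivAt (fun t => (Δ t, s t)) (clampedField M c d (Δ ξ, s ξ)) ξ := by
  rw [clampedField_of_le hc hd]
  exact hΔ.prodMk hs

theorem hasDerivAt_fst_snd_of_clampedField {M c d : ℝ} {f : ℝ → ℝ × ℝ} {ξ : ℝ}
    (hf : HasDerivAt f (clampedField M c d (f ξ)) ξ) (hc : c ≤ (f ξ).2) (hd : |(f ξ).1| ≤ d) :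
    HasDerivAt (fun t => (f t).1) (1 / (2 * (f ξ).2 ^ 2) - 1 / 2) ξ ∧
      HasDerivAt (fun t => (f t).2) (M * (f ξ).1) ξ := by
  rw [clampedField_of_le hc hd] at hf
  exact ⟨(hasFDerivAt_fst (p := f ξ)).comp_hasDerivAt ξ hf,
    (hasFDerivAt_snd (p := f ξ)).comp_hasDerivAt ξ hf⟩

def levelSet (M h : ℝ) : Set (ℝ × ℝ) := {p | 0 < p.2 ∧ energy M p = h}

theorem isClosed_levelSet {M h : ℝ} (hM : 0 < M) (hh : 0 < h) : IsClosed (levelSet M h) := by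
  have hset : levelSet M h = {p | 1 / (4 * h) ≤ p.2} ∩ energy M ⁻¹' {h} := by
    ext p
    exact ⟨fun ⟨hp, hE⟩ => ⟨(lt_and_abs_lt_of_energy_eq hM hp hE).1.le, hE⟩,
      fun ⟨hp, hE⟩ => ⟨lt_of_lt_of_le (by positivity) hp, hE⟩⟩
  rw [hset]
  refine ContinuousOn.preimage_isClosed_of_isClosed ?_
    (isClosed_le continuous_const continuous_snd) isClosed_singleton
  refine ContinuousOn.add (ContinuousOn.div (by fun_prop) (by fun_prop) fun p hp => ?_)
    (by fun_prop)
  have : 0 < p.2 := lt_of_lt_of_le (by positivity) hp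
  positivity

theorem eventually_mem_levelSet {M h : ℝ} (hM : 0 < M) (hh : 0 < h) {f : ℝ → ℝ × ℝ}
    (hf : ∀ t, HasDerivAt f (clampedField M (1 / (4 * h)) (amplitude M h + 1) (f t)) t)
    {t : ℝ} (ht : f t ∈ levelSet M h) : ∀ᶠ u in 𝓝 t, f u ∈ levelSet M h := by
  have hfc : Continuous f := continuous_iff_continuousAt.2 fun t => (hf t).continuousAt
  have hU : IsOpen {p : ℝ × ℝ | 1 / (4 * h) < p.2 ∧ |p.1| < amplitude M h + 1} :=
    (isOpen_lt continuous_const continuous_snd).inter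
      (isOpen_lt (continuous_abs.comp continuous_fst) continuous_const)
  obtain ⟨ε, hε, hsub⟩ := Metric.mem_nhds_iff.1
    ((hU.preimage hfc).mem_nhds (lt_and_abs_lt_of_energy_eq hM ht.1 ht.2))
  have hconst : ∀ w ∈ Metric.ball t ε, HasDerivAt (fun w => energy M ((f w).1, (f w).2)) 0 w :=
    fun w hw => by
      obtain ⟨hcw, hdw⟩ := hsub hw
      obtain ⟨h₁, h₂⟩ := hasDerivAt_fst_snd_of_clampedField (hf w) hcw.le hdw.le
      exact hasDerivAt_energy h₁ h₂ (lt_trans (by positivity) hcw)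
  filter_upwards [Metric.ball_mem_nhds t hε] with u hu
  refine ⟨lt_trans (by positivity) (hsub hu).1, ?_⟩
  simpa [ht.2] using eq_of_hasDerivAt_zero_of_ordConnected (convex_ball t ε).ordConnected
    hconst hu (Metric.mem_ball_self hε)

theorem exists_isSolutionOn_univ {M : ℝ} (hM : 0 < M) (ξ₀ Δ₀ s₀ : ℝ) (hs₀ : 0 < s₀) :
    ∃ Δ s : ℝ → ℝ, IsSolutionOn M Δ s univ ∧ Δ ξ₀ = Δ₀ ∧ s ξ₀ = s₀ := by
  set h := energy M (Δ₀, s₀)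
  have hh : 0 < h := lt_of_lt_of_le one_pos
    ((one_le_gamma hs₀).trans (le_add_of_nonneg_right (by positivity)))
  have hc : 0 < 1 / (4 * h) := by positivity
  obtain ⟨K, hK⟩ := lipschitzWith_clampedField (M := M) (d := amplitude M h + 1) hc
  obtain ⟨f, hf₀, hf⟩ := exists_forall_hasDerivAt_of_lipschitzWith hK
    (norm_clampedField_le hc (add_nonneg (Real.sqrt_nonneg _) zero_le_one)) ξ₀ (Δ₀, s₀)
  have hlevel : ∀ t, f t ∈ levelSet M h :=
    forall_mem_of_eventually_mem (continuous_iff_continuousAt.2 fun t => (hf t).continuousAt)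
      (isClosed_levelSet hM hh) (fun t ht => eventually_mem_levelSet hM hh hf ht) (t₀ := ξ₀)
      (by rw [hf₀]; exact ⟨hs₀, rfl⟩)
  refine ⟨fun t => (f t).1, fun t => (f t).2, fun t _ => ?_, by simp [hf₀], by simp [hf₀]⟩
  obtain ⟨hpos, hE⟩ := hlevel t
  obtain ⟨hct, hdt⟩ := lt_and_abs_lt_of_energy_eq hM hpos hE
  obtain ⟨h₁, h₂⟩ := hasDerivAt_fst_snd_of_clampedField (hf t) hct.le hdt.le
  exact ⟨h₁, h₂, hpos⟩

theorem IsSolutionOn.eqOn {M : ℝ} (hM : 0 < M) {J : Set ℝ} (hJ : J.OrdConnected)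
    {Δ₁ s₁ Δ₂ s₂ : ℝ → ℝ} (h₁ : IsSolutionOn M Δ₁ s₁ J) (h₂ : IsSolutionOn M Δ₂ s₂ J)
    {t₀ : ℝ} (ht₀ : t₀ ∈ J) (hΔ : Δ₁ t₀ = Δ₂ t₀) (hs : s₁ t₀ = s₂ t₀) :
    EqOn Δ₁ Δ₂ J ∧ EqOn s₁ s₂ J := by
  set h := energy M (Δ₁ t₀, s₁ t₀)
  have hh : 1 ≤ h := (one_le_gamma (h₁ t₀ ht₀).2.2).trans
    (le_add_of_nonneg_right (by positivity))
  obtain ⟨K, hK⟩ := lipschitzWith_clampedField (M := M) (d := amplitude M h + 1)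
    (show 0 < 1 / (4 * h) by positivity)
  have hclamped : ∀ {Δ s : ℝ → ℝ}, IsSolutionOn M Δ s J → energy M (Δ t₀, s t₀) = h →
      ∀ t ∈ J, HasDerivAt (fun t => (Δ t, s t))
        (clampedField M (1 / (4 * h)) (amplitude M h + 1) (Δ t, s t)) t := by
    intro Δ s hsol hE t ht
    obtain ⟨hc, hd⟩ := lt_and_abs_lt_of_energy_eq hM (hsol t ht).2.2
      ((hsol.energy_eq hJ ht ht₀).trans hE)
    exact hasDerivAt_prodMk_clampedField (hsol t ht).1 (hsol t ht).2.1 hc.le hd.le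
  have heq := eqOn_of_hasDerivAt_of_ordConnected hK hJ (hclamped h₁ rfl)
    (hclamped h₂ (by rw [← hΔ, ← hs])) ht₀ (by rw [hΔ, hs])
  exact ⟨fun t ht => congrArg Prod.fst (heq ht), fun t ht => congrArg Prod.snd (heq ht)⟩

noncomputable def periodIntegrand (M h x : ℝ) : ℝ :=
  (h - M * x ^ 2 / 2) / √((h - M * x ^ 2 / 2) ^ 2 - 1)

theorem periodIntegrand_neg (M h x : ℝ) : periodIntegrand M h (-x) = periodIntegrand M h x := by
  simp [periodIntegrand]

theorem periodIntegrand_of_energy_eq {M h x y : ℝ} (hy : 0 < y) (hE : energy M (x, y) = h) :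
    periodIntegrand M h x = (y ^ 2 + 1) / |1 - y ^ 2| := by
  have hγ : h - M * x ^ 2 / 2 = (y ^ 2 + 1) / (2 * y) := by
    rw [← hE, energy, gamma]
    ring
  have hsq : ((y ^ 2 + 1) / (2 * y)) ^ 2 - 1 = ((1 - y ^ 2) / (2 * y)) ^ 2 := by
    field_simp
    ring
  rw [periodIntegrand, hγ, hsq, Real.sqrt_sq_eq_abs, abs_div,
    abs_of_pos (by positivity : 0 < 2 * y), div_div_div_cancel_right₀ (by positivity)]

theorem amplitude_sq {M h : ℝ} (hM : 0 < M) (hh : 1 ≤ h) :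
    amplitude M h ^ 2 = 2 * (h - 1) / M :=
  Real.sq_sqrt (div_nonneg (by linarith) hM.le)

theorem one_lt_of_abs_lt_amplitude {M h x : ℝ} (hM : 0 < M) (hh : 1 ≤ h)
    (hx : |x| < amplitude M h) : 1 < h - M * x ^ 2 / 2 := by
  have hx2 : x ^ 2 < amplitude M h ^ 2 := sq_lt_sq' (abs_lt.1 hx).1 (abs_lt.1 hx).2
  rw [amplitude_sq hM hh, lt_div_iff₀ hM] at hx2
  linarith

theorem continuousOn_periodIntegrand {M h : ℝ} (hM : 0 < M) (hh : 1 ≤ h) :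
    ContinuousOn (periodIntegrand M h) (Ioo (-amplitude M h) (amplitude M h)) := by
  refine ContinuousOn.div (by fun_prop) (by fun_prop) fun x hx => ?_
  have := one_lt_of_abs_lt_amplitude hM hh (abs_lt.2 hx)
  exact (Real.sqrt_pos.2 (by nlinarith)).ne'

theorem intervalIntegrable_periodIntegrand {M h : ℝ} (hM : 0 < M) (hh : 1 < h) :
    IntervalIntegrable (periodIntegrand M h) volume 0 (amplitude M h) := by
  set A := amplitude M h
  have hA : 0 < A := Real.sqrt_pos.2 (div_pos (by linarith) hM)
  have hA2 : A ^ 2 = 2 * (h - 1) / M := amplitude_sq hM hh.le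
  refine intervalIntegrable_div_of_mul_sqrt_le (n := fun x => h - M * x ^ 2 / 2)
    (r := fun x => √((h - M * x ^ 2 / 2) ^ 2 - 1)) hA.le (Real.sqrt_pos.2 (mul_pos hM hA))
    (by fun_prop) (by fun_prop) fun x hx => ?_
  -- `γ̆ - 1 = M (A - x) (A + x) / 2 ≥ M A (A - x) / 2` and `γ̆ + 1 ≥ 2`
  have hγ : h - M * x ^ 2 / 2 - 1 = M * (A - x) * (A + x) / 2 := by
    rw [eq_div_iff hM.ne'] at hA2
    linear_combination -hA2 / 2
  have hAx : 0 ≤ M * (A - x) * x := mul_nonneg (mul_nonneg hM.le (by linarith [hx.2])) hx.1.le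
  have hγ₁ : 0 ≤ h - M * x ^ 2 / 2 - 1 := by rw [hγ]; nlinarith [hx.1, hx.2]
  rw [← Real.sqrt_mul (by positivity)]
  exact Real.sqrt_le_sqrt (by nlinarith)

theorem IsSolutionOn.mono {M : ℝ} {Δ s : ℝ → ℝ} {J J' : Set ℝ} (hsol : IsSolutionOn M Δ s J')
    (hJ : J ⊆ J') : IsSolutionOn M Δ s J :=
  fun ξ hξ => hsol ξ (hJ hξ)

section Orbit

variable {M h : ℝ} {Δ s : ℝ → ℝ}

theorem IsSolutionOn.reflect (hM : 0 < M) (hsol : IsSolutionOn M Δ s univ) {a : ℝ}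
    (ha : Δ a = 0) (ξ : ℝ) : Δ (2 * a - ξ) = -Δ ξ ∧ s (2 * a - ξ) = s ξ := by
  have hrefl : IsSolutionOn M (fun ξ => -Δ (2 * a - ξ)) (fun ξ => s (2 * a - ξ)) univ := by
    intro ξ _
    obtain ⟨hΔ, hs, hpos⟩ := hsol (2 * a - ξ) trivial
    refine ⟨?_, ?_, hpos⟩
    · exact (hΔ.comp_const_sub (2 * a) ξ).neg.congr_deriv (neg_neg _)
    · simpa using hs.comp_const_sub (2 * a) ξ
  obtain ⟨hΔ, hs⟩ := hrefl.eqOn hM ordConnected_univ hsol (t₀ := a) trivial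
    (by rw [show 2 * a - a = a by ring, ha, neg_zero]) (by rw [show 2 * a - a = a by ring])
  exact ⟨by simpa using congrArg Neg.neg (hΔ (mem_univ ξ)), hs (mem_univ ξ)⟩

theorem IsSolutionOn.periodic_of_zeros (hM : 0 < M) (hsol : IsSolutionOn M Δ s univ)
    {a b : ℝ} (ha : Δ a = 0) (hb : Δ b = 0) :
    Function.Periodic Δ (2 * (b - a)) ∧ Function.Periodic s (2 * (b - a)) := by
  have hshift : ∀ ξ, ξ + 2 * (b - a) = 2 * b - (2 * a - ξ) := fun ξ => by ring
  refine ⟨fun ξ => ?_, fun ξ => ?_⟩ <;> rw [hshift]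
  · rw [(hsol.reflect hM hb _).1, (hsol.reflect hM ha ξ).1, neg_neg]
  · rw [(hsol.reflect hM hb _).2, (hsol.reflect hM ha ξ).2]

theorem IsSolutionOn.continuous_fst (hsol : IsSolutionOn M Δ s univ) : Continuous Δ :=
  continuous_iff_continuousAt.2 fun t => (hsol t trivial).1.continuousAt

theorem IsSolutionOn.exists_nonpos_ge (hM : 0 < M) (hsol : IsSolutionOn M Δ s univ) (T : ℝ) :
    ∃ t ∈ Ici T, Δ t ≤ 0 := by
  by_contra! hpos
  have hΔ := fun t => (hsol t trivial).1
  have hs := fun t => (hsol t trivial).2.1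
  have hspos := fun t => (hsol t trivial).2.2
  by_cases hs₁ : ∃ ξ ∈ Ici T, 1 < s ξ
  · -- `s` keeps increasing, so `Δ' ≤ 1 / (2 s ξ²) - 1 / 2 < 0` from then on
    obtain ⟨ξ, hξ, hsξ⟩ := hs₁
    have hmono : MonotoneOn s (Ici ξ) := monotoneOn_of_hasDerivAt_nonneg (convex_Ici ξ) hs
      fun t ht => (mul_pos hM (hpos t (Ici_subset_Ici.2 hξ (interior_subset ht)))).le
    have hc : 0 < 1 / 2 - 1 / (2 * s ξ ^ 2) := by
      rw [sub_pos, div_lt_div_iff₀ (by positivity) (by norm_num)]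
      nlinarith
    obtain ⟨t, ht, hlt⟩ := exists_lt_of_le_hasDerivAt hc (fun t _ => (hΔ t).neg) (fun t ht => by
      have hst : s ξ ≤ s t := hmono (mem_Ici.2 le_rfl) ht ht
      have := hspos ξ
      have : 1 / (2 * s t ^ 2) ≤ 1 / (2 * s ξ ^ 2) := by gcongr
      linarith) 0
    linarith [hpos t (Ici_subset_Ici.2 hξ ht), show (-Δ) t = -Δ t from rfl]
  · -- `Δ` keeps increasing, so `s` increases at a linear rate
    push Not at hs₁
    have hmono : MonotoneOn Δ (Ici T) :=
      monotoneOn_of_hasDerivAt_nonneg (convex_Ici T) hΔ fun t ht => by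
        have := hs₁ t (interior_subset ht)
        have := hspos t
        have : 1 / 2 ≤ 1 / (2 * s t ^ 2) := by
          rw [div_le_div_iff₀ (by norm_num) (by positivity)]
          nlinarith
        linarith
    have hT : T ∈ Ici T := mem_Ici.2 le_rfl
    obtain ⟨t, ht, hlt⟩ := exists_lt_of_le_hasDerivAt (mul_pos hM (hpos T hT))
      (fun t _ => hs t) (fun t ht => by
        have := hmono hT ht ht
        nlinarith) 1
    linarith [hs₁ t ht]

theorem IsSolutionOn.exists_nonneg_ge (hM : 0 < M) (hsol : IsSolutionOn M Δ s univ) (T : ℝ) :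
    ∃ t ∈ Ici T, 0 ≤ Δ t := by
  by_contra! hneg
  have hΔ := fun t => (hsol t trivial).1
  have hs := fun t => (hsol t trivial).2.1
  have hspos := fun t => (hsol t trivial).2.2
  by_cases hs₁ : ∃ ξ ∈ Ici T, s ξ < 1
  · -- `s` keeps decreasing, so `Δ' ≥ 1 / (2 s ξ²) - 1 / 2 > 0` from then on
    obtain ⟨ξ, hξ, hsξ⟩ := hs₁
    have hanti : MonotoneOn (fun t => -s t) (Ici ξ) :=
      monotoneOn_of_hasDerivAt_nonneg (convex_Ici ξ) (fun t => (hs t).neg) fun t ht => by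
        nlinarith [hneg t (Ici_subset_Ici.2 hξ (interior_subset ht))]
    have hc : 0 < 1 / (2 * s ξ ^ 2) - 1 / 2 := by
      have := hspos ξ
      rw [sub_pos, div_lt_div_iff₀ (by norm_num) (by positivity)]
      nlinarith
    obtain ⟨t, ht, hlt⟩ := exists_lt_of_le_hasDerivAt hc (fun t _ => hΔ t) (fun t ht => by
      have hst : s t ≤ s ξ := by simpa using hanti (mem_Ici.2 le_rfl) ht ht
      have := hspos t
      gcongr) 0
    exact (hneg t (Ici_subset_Ici.2 hξ ht)).not_gt hlt
  · -- `Δ` keeps decreasing, so `s` decreases at a linear rate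
    push Not at hs₁
    have hanti : MonotoneOn (fun t => -Δ t) (Ici T) :=
      monotoneOn_of_hasDerivAt_nonneg (convex_Ici T) (fun t => (hΔ t).neg) fun t ht => by
        have := hs₁ t (interior_subset ht)
        have : 1 / (2 * s t ^ 2) ≤ 1 / 2 := by
          rw [div_le_div_iff₀ (by positivity) (by norm_num)]
          nlinarith
        linarith
    have hT : T ∈ Ici T := mem_Ici.2 le_rfl
    obtain ⟨t, ht, hlt⟩ := exists_lt_of_le_hasDerivAt (mul_pos hM (neg_pos.2 (hneg T hT)))
      (fun t _ => (hs t).neg) (fun t ht => by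
        have := hanti hT ht ht
        simp only at this
        nlinarith) 0
    linarith [hspos t, show (-s) t = -s t from rfl]

theorem IsSolutionOn.exists_zero_ge (hM : 0 < M) (hsol : IsSolutionOn M Δ s univ) (T : ℝ) :
    ∃ ξ ∈ Ici T, Δ ξ = 0 := by
  obtain ⟨t₁, ht₁, h₁⟩ := hsol.exists_nonpos_ge hM T
  obtain ⟨t₂, ht₂, h₂⟩ := hsol.exists_nonneg_ge hM T
  obtain ⟨ξ, hξ, hξ₀⟩ := intermediate_value_uIcc hsol.continuous_fst.continuousOn
    (mem_uIcc.2 (Or.inl ⟨h₁, h₂⟩))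
  exact ⟨ξ, le_trans (le_inf ht₁ ht₂) hξ.1, hξ₀⟩

theorem IsSolutionOn.exists_next_zero (hM : 0 < M) (hsol : IsSolutionOn M Δ s univ) {z : ℝ}
    (hsz : s z ≠ 1) : ∃ b, z < b ∧ Δ b = 0 ∧ ∀ t ∈ Ioo z b, Δ t ≠ 0 := by
  obtain ⟨hΔ, -, hpos⟩ := hsol z trivial
  have hΔ' : 1 / (2 * s z ^ 2) - 1 / 2 ≠ 0 := by
    intro h0
    field_simp at h0
    exact hsz (by nlinarith)
  have hev : ∀ᶠ t in 𝓝[>] z, Δ t ≠ 0 :=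
    (hΔ.eventually_ne hΔ').filter_mono (nhdsWithin_mono z (s := Ioi z) fun y hy => ne_of_gt hy)
  obtain ⟨u, hzu, hu⟩ := mem_nhdsGT_iff_exists_Ioo_subset.1 hev
  set Z := {t | u ≤ t ∧ Δ t = 0}
  have hZ : IsClosed Z := isClosed_Ici.inter (isClosed_eq hsol.continuous_fst continuous_const)
  have hbdd : BddBelow Z := ⟨u, fun t ht => ht.1⟩
  obtain ⟨w, hw, hw₀⟩ := hsol.exists_zero_ge hM u
  have hmem := hZ.csInf_mem ⟨w, hw, hw₀⟩ hbdd
  refine ⟨sInf Z, lt_of_lt_of_le hzu hmem.1, hmem.2, fun t ht => ?_⟩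
  rcases lt_or_ge t u with htu | htu
  · exact hu ⟨ht.1, htu⟩
  · exact fun h₀ => (csInf_le hbdd ⟨htu, h₀⟩).not_gt ht.2

theorem ne_one_of_energy_zero_eq {y : ℝ} (hE : energy M (0, y) = h) (hh : 1 < h) : y ≠ 1 := by
  rintro rfl
  simp [energy, gamma_one] at hE
  linarith

theorem IsSolutionOn.exists_pos_between_zeros (hM : 0 < M) (hsol : IsSolutionOn M Δ s univ)
    (hE : ∀ t, energy M (Δ t, s t) = h) (hh : 1 < h) :
    ∃ a b, a < b ∧ Δ a = 0 ∧ Δ b = 0 ∧ ∀ t ∈ Ioo a b, 0 < Δ t := by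
  obtain ⟨z, -, hz⟩ := hsol.exists_zero_ge hM 0
  obtain ⟨b, hzb, hb, hne⟩ := hsol.exists_next_zero hM (ne_one_of_energy_zero_eq (hz ▸ hE z) hh)
  have hsign : ∀ {t u}, t ∈ Ioo z b → u ∈ Ioo z b → 0 < Δ t → 0 < Δ u := fun ht hu =>
    isPreconnected_Ioo.pos_of_ne_zero hsol.continuous_fst.continuousOn hne ht hu
  have hmid : (z + b) / 2 ∈ Ioo z b := ⟨by linarith, by linarith⟩
  rcases (hne _ hmid).lt_or_gt with hneg | hpos
  · -- `Δ < 0` between the two zeros: reflect this arc about `b`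
    refine ⟨b, 2 * b - z, by linarith, hb, by rw [(hsol.reflect hM hb z).1, hz, neg_zero],
      fun t ht => ?_⟩
    have ht' : 2 * b - t ∈ Ioo z b := ⟨by linarith [ht.2], by linarith [ht.1]⟩
    have hlt : Δ (2 * b - t) < 0 :=
      (hne _ ht').lt_of_le (not_lt.1 fun h => (hsign ht' hmid h).not_gt hneg)
    linarith [(hsol.reflect hM hb t).1]
  · exact ⟨z, b, hzb, hz, hb, fun t ht => hsign hmid ht hpos⟩

/-- `σ = ±1` is the sign of `1 - s` on the arc; there `σ · periodIntegrand - 1 = 1 / Δ'` along the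
orbit, so the integral measures elapsed time. -/
theorem IsSolutionOn.integral_mul_periodIntegrand_sub_one (hsol : IsSolutionOn M Δ s univ)
    (hE : ∀ t, energy M (Δ t, s t) = h) {σ : ℝ} (hσ : σ = 1 ∨ σ = -1) {p q : ℝ} (hpq : p ≤ q)
    (hsign : ∀ t ∈ Ioo p q, 0 < σ * (1 - s t))
    (hcont : ContinuousOn (periodIntegrand M h) (uIoo (Δ p) (Δ q)))
    (hint : IntervalIntegrable (periodIntegrand M h) volume (Δ p) (Δ q)) :
    ∫ x in Δ p..Δ q, (σ * periodIntegrand M h x - 1) = q - p := by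
  have hΔ := fun t => (hsol t trivial).1
  have hspos := fun t => (hsol t trivial).2.2
  have hmono : StrictMonoOn (fun t => σ * Δ t) (Icc p q) :=
    strictMonoOn_of_hasDerivAt_pos (convex_Icc p q) (fun t => (hΔ t).const_mul σ) fun t ht => by
      rw [interior_Icc] at ht
      have hst := hspos t
      have : σ * (1 / (2 * s t ^ 2) - 1 / 2) = σ * (1 - s t) * ((1 + s t) / (2 * s t ^ 2)) := by
        field_simp
        ring
      rw [this]
      exact mul_pos (hsign t ht) (by positivity)
  have hmaps : MapsTo Δ (Ioo p q) (uIoo (Δ p) (Δ q)) := fun t ht => by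
    have h₁ := hmono (left_mem_Icc.2 hpq) (Ioo_subset_Icc_self ht) ht.1
    have h₂ := hmono (Ioo_subset_Icc_self ht) (right_mem_Icc.2 hpq) ht.2
    rcases hσ with rfl | rfl
    · simp only [one_mul] at h₁ h₂
      exact mem_uIoo_of_lt h₁ h₂
    · simp only [neg_one_mul, neg_lt_neg_iff] at h₁ h₂
      exact mem_uIoo_of_gt h₂ h₁
  refine integral_eq_sub_of_mul_hasDerivAt_eq_one hpq (HasDerivAt.continuousOn fun t _ => hΔ t)
    (fun t _ => hΔ t) hmaps ((continuousOn_const.mul hcont).sub continuousOn_const)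
    ((hint.const_mul σ).sub intervalIntegrable_const) fun t ht => ?_
  have hst := hspos t
  have hsign := hsign t ht
  rw [periodIntegrand_of_energy_eq hst (hE t)]
  rcases hσ with rfl | rfl
  · rw [abs_of_pos (by nlinarith)]
    have : 1 - s t ^ 2 ≠ 0 := by nlinarith
    field_simp
    ring
  · rw [abs_of_neg (by nlinarith)]
    have : 1 - s t ^ 2 ≠ 0 := by nlinarith
    field_simp
    ring

theorem IsSolutionOn.exists_mem_Ioo_eq_amplitude (hM : 0 < M) (hsol : IsSolutionOn M Δ s univ)
    (hE : ∀ t, energy M (Δ t, s t) = h) {a b : ℝ} (hab : a < b) (ha : Δ a = 0) (hb : Δ b = 0)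
    (hpos : ∀ t ∈ Ioo a b, 0 < Δ t) :
    ∃ m ∈ Ioo a b, Δ m = amplitude M h ∧ (∀ t ∈ Ioo a m, s t < 1) ∧ ∀ t ∈ Ioo m b, 1 < s t := by
  have hs := fun t => (hsol t trivial).2.1
  have hspos := fun t => (hsol t trivial).2.2
  have hsmono : StrictMonoOn s (Icc a b) :=
    strictMonoOn_of_hasDerivAt_pos (convex_Icc a b) hs fun t ht => by
      rw [interior_Icc] at ht
      exact mul_pos hM (hpos t ht)
  -- `γ(s a) = h = γ(s b)` at the two zeros of `Δ`, hence `s a * s b = 1`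
  have hsab : s a < s b := hsmono (left_mem_Icc.2 hab.le) (right_mem_Icc.2 hab.le) hab
  have hγ : gamma (s a) = gamma (s b) := by
    have hEa := hE a
    have hEb := hE b
    simp only [energy, ha, hb] at hEa hEb
    linarith
  have hprod := (eq_or_mul_eq_one_of_gamma_eq (hspos a) (hspos b) hγ).resolve_left hsab.ne
  have hsa : s a < 1 := by nlinarith [hspos a]
  have hsb : 1 < s b := by nlinarith [hspos a]
  obtain ⟨m, hm, hsm⟩ := intermediate_value_Icc hab.le
    (HasDerivAt.continuousOn fun t _ => hs t) ⟨hsa.le, hsb.le⟩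
  have ham : a < m := lt_of_le_of_ne hm.1 (by rintro rfl; linarith)
  have hmb : m < b := lt_of_le_of_ne hm.2 (by rintro rfl; linarith)
  refine ⟨m, ⟨ham, hmb⟩, ?_, fun t ht => ?_, fun t ht => ?_⟩
  · have hEm := hE m
    simp only [energy, hsm, gamma_one] at hEm
    rw [amplitude, ← Real.sqrt_sq (hpos m ⟨ham, hmb⟩).le]
    congr 1
    field_simp
    linarith
  · exact hsm ▸ hsmono ⟨ht.1.le, ht.2.le.trans hmb.le⟩ ⟨ham.le, hmb.le⟩ ht.2
  · exact hsm ▸ hsmono ⟨ham.le, hmb.le⟩ ⟨ham.le.trans ht.1.le, ht.2.le⟩ ht.1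

theorem IsSolutionOn.sub_eq_integral_periodIntegrand (hM : 0 < M)
    (hsol : IsSolutionOn M Δ s univ) (hE : ∀ t, energy M (Δ t, s t) = h) (hh : 1 < h)
    {a b : ℝ} (hab : a < b) (ha : Δ a = 0) (hb : Δ b = 0) (hpos : ∀ t ∈ Ioo a b, 0 < Δ t) :
    b - a = ∫ x in -amplitude M h..amplitude M h, periodIntegrand M h x := by
  obtain ⟨m, ⟨ham, hmb⟩, hΔm, hlt, hgt⟩ :=
    hsol.exists_mem_Ioo_eq_amplitude hM hE hab ha hb hpos
  set A := amplitude M h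
  have hA : 0 < A := Real.sqrt_pos.2 (div_pos (by linarith) hM)
  have hint := intervalIntegrable_periodIntegrand hM hh
  have hcont : ContinuousOn (periodIntegrand M h) (uIoo 0 A) :=
    (continuousOn_periodIntegrand hM hh.le).mono (by
      rw [uIoo_of_le hA.le]
      exact Ioo_subset_Ioo_left (by linarith))
  have h₁ := hsol.integral_mul_periodIntegrand_sub_one hE (Or.inl rfl) ham.le
    (fun t ht => by linarith [hlt t ht]) (by rwa [ha, hΔm]) (by rwa [ha, hΔm])
  have h₂ := hsol.integral_mul_periodIntegrand_sub_one hE (Or.inr rfl) hmb.le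
    (fun t ht => by linarith [hgt t ht]) (by rwa [hΔm, hb, uIoo_comm])
    (by rw [hΔm, hb]; exact hint.symm)
  rw [ha, hΔm, integral_sub (hint.const_mul 1) intervalIntegrable_const,
    intervalIntegral.integral_const_mul] at h₁
  rw [hΔm, hb, integral_symm, integral_sub (hint.const_mul (-1)) intervalIntegrable_const,
    intervalIntegral.integral_const_mul] at h₂
  rw [integral_neg_eq_two_mul_of_even (periodIntegrand_neg M h) hint]
  simp only [intervalIntegral.integral_const, smul_eq_mul] at h₁ h₂
  linarith

theorem IsSolutionOn.periodic (hM : 0 < M) (hsol : IsSolutionOn M Δ s univ)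
    (hE : ∀ t, energy M (Δ t, s t) = h) (hh : 1 < h) :
    Function.Periodic Δ (2 * ∫ x in -amplitude M h..amplitude M h, periodIntegrand M h x) ∧
      Function.Periodic s (2 * ∫ x in -amplitude M h..amplitude M h, periodIntegrand M h x) := by
  obtain ⟨a, b, hab, ha, hb, hpos⟩ := hsol.exists_pos_between_zeros hM hE hh
  rw [← hsol.sub_eq_integral_periodIntegrand hM hE hh hab ha hb hpos]
  exact hsol.periodic_of_zeros hM ha hb

end Orbit

end PlasmaWave

theorem stmt_13_general (M : ℝ) (hM : 0 < M) (J : Set ℝ)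
    (hJconn : J.OrdConnected) (ξ₁ : ℝ) (hξ₁ : ξ₁ ∈ J) (Δ s : ℝ → ℝ)
    (hsol : ∀ ξ ∈ J, HasDerivAt Δ (1 / (2 * (s ξ) ^ 2) - 1 / 2) ξ ∧
      HasDerivAt s (M * Δ ξ) ξ ∧ 0 < s ξ)
    (h : ℝ) (hdef : h = ((s ξ₁) ^ 2 + 1) / (2 * s ξ₁) + M * (Δ ξ₁) ^ 2 / 2)
    (hh : 1 < h)
    (ξH : ℝ) (hξH : ξH = 2 * ∫ x in (-(Real.sqrt (2 * (h - 1) / M)))..(Real.sqrt (2 * (h - 1) / M)),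
      (h - M * x ^ 2 / 2) / Real.sqrt ((h - M * x ^ 2 / 2) ^ 2 - 1)) :
    ∃ D S : ℝ → ℝ,
      (∀ ξ : ℝ, HasDerivAt D (1 / (2 * (S ξ) ^ 2) - 1 / 2) ξ ∧
        HasDerivAt S (M * D ξ) ξ ∧ 0 < S ξ) ∧
      (∀ ξ ∈ J, D ξ = Δ ξ ∧ S ξ = s ξ) ∧
      Function.Periodic D ξH ∧ Function.Periodic S ξH := by
  obtain ⟨D, S, hDS, hD₁, hS₁⟩ :=
    PlasmaWave.exists_isSolutionOn_univ hM ξ₁ (Δ ξ₁) (s ξ₁) (hsol ξ₁ hξ₁).2.2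
  have hE : ∀ t, PlasmaWave.energy M (D t, S t) = h := fun t => by
    rw [hDS.energy_eq ordConnected_univ (mem_univ t) (mem_univ ξ₁), hD₁, hS₁, hdef]
    rfl
  obtain ⟨hDJ, hSJ⟩ := (hDS.mono (subset_univ J)).eqOn hM hJconn hsol hξ₁ hD₁ hS₁
  obtain ⟨hperD, hperS⟩ := hDS.periodic hM hE hh
  subst hξH
  exact ⟨D, S, fun ξ => hDS ξ trivial, fun ξ hξ => ⟨hDJ hξ, hSJ hξ⟩, hperD, hperS⟩

/-- For the autonomous system `Δ' = 1/(2s²) - 1/2`, `s' = MΔ` on `{s > 0}` with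
energy `h = (s²+1)/(2s) + MΔ²/2 > 1`, any solution extends to a global solution
on `ℝ` which is periodic with period
`ξ_H = 2∫_{-Δ_M}^{Δ_M} γ̆/√(γ̆²-1) dΔ`, `γ̆(Δ) = h - MΔ²/2`, `Δ_M = √(2(h-1)/M)`. -/
theorem stmt_13 (M : ℝ) (hM : 0 < M) (J : Set ℝ) (hJopen : IsOpen J)
    (hJconn : J.OrdConnected) (ξ₁ : ℝ) (hξ₁ : ξ₁ ∈ J) (Δ s : ℝ → ℝ)
    (hsol : ∀ ξ ∈ J, HasDerivAt Δ (1 / (2 * (s ξ) ^ 2) - 1 / 2) ξ ∧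
      HasDerivAt s (M * Δ ξ) ξ ∧ 0 < s ξ)
    (h : ℝ) (hdef : h = ((s ξ₁) ^ 2 + 1) / (2 * s ξ₁) + M * (Δ ξ₁) ^ 2 / 2)
    (hh : 1 < h)
    (ξH : ℝ) (hξH : ξH = 2 * ∫ x in (-(Real.sqrt (2 * (h - 1) / M)))..(Real.sqrt (2 * (h - 1) / M)),
      (h - M * x ^ 2 / 2) / Real.sqrt ((h - M * x ^ 2 / 2) ^ 2 - 1)) :
    ∃ D S : ℝ → ℝ,
      (∀ ξ : ℝ, HasDerivAt D (1 / (2 * (S ξ) ^ 2) - 1 / 2) ξ ∧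
        HasDerivAt S (M * D ξ) ξ ∧ 0 < S ξ) ∧
      (∀ ξ ∈ J, D ξ = Δ ξ ∧ S ξ = s ξ) ∧
      Function.Periodic D ξH ∧ Function.Periodic S ξH :=
  stmt_13_general M hM J hJconn ξ₁ hξ₁ Δ s hsol h hdef hh ξH hξH
end

section
/- Let M > 0 and h > 1. Set a := √(2(h − 1)/M), γ̆(x) := h − M x²/2, and α := √((h − 1)/(h + 1)). Then 2 ∫_{−a}^{a} γ̆(x)/√(γ̆(x)² − 1) dx = 8 √((h + 1)/(2M)) [E(α) − K(α)/(h + 1)], where K(α) = ∫₀^{π/2} dθ/√(1 − α² sin²θ) and E(α) = ∫₀^{π/2} √(1 − α² sin²θ) dθ are the complete elliptic integrals of the first and second kind. -/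
/-!
Substituting `x = a sin θ` with `a = √(2(h - 1)/M)` turns `γ̆(x)` into `(h + 1) u - 1`, where
`u = 1 - α² sin² θ`, and `γ̆(x)² - 1` into `(a cos θ)² · M (h + 1) u / 2`. The Jacobian `a cos θ`
cancels the vanishing factor of the denominator, leaving the even, continuous integrand
`√(2 / (M (h + 1))) · ((h + 1) √u - 1 / √u)` on `(-π/2, π/2)`, whose integral is twice that over
`(0, π/2)`, i.e. a combination of `E(α)` and `K(α)`.
-/

open Real MeasureTheory Set

theorem image_mul_sin_Ioo {a : ℝ} (ha : 0 < a) :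
    (fun θ => a * sin θ) '' Ioo (-(π / 2)) (π / 2) = Ioo (-a) a := by
  have hsin : sin '' Ioo (-(π / 2)) (π / 2) = Ioo (-1) 1 :=
    sinPartialHomeomorph.image_source_eq_target
  rw [← image_image (a * ·) sin, hsin, image_mul_left_Ioo ha, mul_neg, mul_one]

-- No integrability is assumed: the change of variables preserves integrability, so when `g` is
-- not integrable both sides are the junk value `0`.
theorem integral_eq_setIntegral_Ioo_comp_mul_sin {E : Type*} [NormedAddCommGroup E]
    [NormedSpace ℝ E] {a : ℝ} (ha : 0 < a) (g : ℝ → E) :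
    ∫ x in -a..a, g x = ∫ θ in Ioo (-(π / 2)) (π / 2), (a * cos θ) • g (a * sin θ) := by
  have hinj : InjOn (fun θ => a * sin θ) (Ioo (-(π / 2)) (π / 2)) := fun x hx y hy hxy =>
    injOn_sin (Ioo_subset_Icc_self hx) (Ioo_subset_Icc_self hy) (mul_left_cancel₀ ha.ne' hxy)
  have hsubst := integral_image_eq_integral_abs_deriv_smul measurableSet_Ioo
    (fun θ _ => ((hasDerivAt_sin θ).const_mul a).hasDerivWithinAt) hinj g
  rw [image_mul_sin_Ioo ha] at hsubst
  rw [intervalIntegral.integral_of_le (by linarith), integral_Ioc_eq_integral_Ioo, hsubst]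
  refine setIntegral_congr_fun measurableSet_Ioo fun θ hθ => ?_
  rw [abs_of_pos (mul_pos ha (cos_pos_of_mem_Ioo hθ))]

theorem Function.Even.intervalIntegral_neg_eq_two_smul {E : Type*} [NormedAddCommGroup E]
    [NormedSpace ℝ E] {f : ℝ → E} (hf : Function.Even f) {b : ℝ}
    (hint : IntervalIntegrable f volume 0 b) :
    ∫ x in -b..b, f x = (2 : ℝ) • ∫ x in 0..b, f x := by
  have hneg : ∫ x in -b..0, f x = ∫ x in 0..b, f x := by
    have := intervalIntegral.integral_comp_neg (a := 0) (b := b) f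
    simp only [hf.eq, neg_zero] at this
    exact this.symm
  have hint' : IntervalIntegrable f volume (-b) 0 := by
    simpa only [zero_sub, hf.eq, neg_zero] using (hint.comp_sub_left 0).symm
  rw [← intervalIntegral.integral_add_adjacent_intervals hint' hint, hneg, two_smul]

theorem one_sub_mul_sin_sq_pos {k : ℝ} (hk : k < 1) (θ : ℝ) : 0 < 1 - k * sin θ ^ 2 := by
  rcases le_or_gt k 0 with hk0 | hk0
  · nlinarith [sq_nonneg (sin θ)]
  · nlinarith [sin_sq_le_one θ]

theorem plasma_integrand_comp_mul_sin {M h s c : ℝ} (hM : 0 < M) (hh : 1 < h)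
    (hsc : s ^ 2 + c ^ 2 = 1) (hc : 0 < c) :
    √(2 * (h - 1) / M) * c *
        ((h - M * (√(2 * (h - 1) / M) * s) ^ 2 / 2) /
          √((h - M * (√(2 * (h - 1) / M) * s) ^ 2 / 2) ^ 2 - 1)) =
      2 * √((h + 1) / (2 * M)) / (h + 1) *
        ((h + 1) * √(1 - (h - 1) / (h + 1) * s ^ 2) - 1 / √(1 - (h - 1) / (h + 1) * s ^ 2)) := by
  set a := √(2 * (h - 1) / M)
  set u := 1 - (h - 1) / (h + 1) * s ^ 2 with hu_def
  have ha2 : a ^ 2 = 2 * (h - 1) / M := sq_sqrt (by positivity)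
  have hu : 0 < u := by
    have : s ^ 2 ≤ 1 := by nlinarith
    have : (h - 1) / (h + 1) < 1 := (div_lt_one (by linarith)).2 (by linarith)
    nlinarith
  have hγ : h - M * (a * s) ^ 2 / 2 = (h + 1) * u - 1 := by
    rw [mul_pow, ha2, hu_def]; field_simp; ring
  have hγ2 : ((h + 1) * u - 1) ^ 2 - 1 = (a * c) ^ 2 * (M * (h + 1) / 2 * u) := by
    rw [mul_pow, ha2, hu_def, show c ^ 2 = 1 - s ^ 2 by linarith]; field_simp; ring
  have hcoef : 2 * √((h + 1) / (2 * M)) / (h + 1) = 1 / √(M * (h + 1) / 2) := by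
    rw [div_eq_div_iff (by linarith) (sqrt_pos.2 (by positivity)).ne', mul_assoc,
      ← sqrt_mul (by positivity),
      show (h + 1) / (2 * M) * (M * (h + 1) / 2) = ((h + 1) / 2) ^ 2 by field_simp,
      sqrt_sq (by linarith)]
    ring
  have hsplit : (h + 1) * √u - 1 / √u = ((h + 1) * u - 1) / √u := by
    field_simp [sqrt_pos.2 hu]
    rw [sq_sqrt hu.le]
  have ha : 0 < a := sqrt_pos.2 (by positivity)
  rw [hγ, hγ2, sqrt_mul (by positivity), sqrt_sq (by positivity), sqrt_mul (by positivity), hcoef,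
    hsplit]
  field_simp


theorem integral_mul_sqrt_sub_div_sqrt_sin_sq {k : ℝ} (hk : k < 1) (A B : ℝ) :
    ∫ θ in -(π / 2)..π / 2, (A * √(1 - k * sin θ ^ 2) - B / √(1 - k * sin θ ^ 2)) =
      2 * (A * (∫ θ in 0..π / 2, √(1 - k * sin θ ^ 2)) -
        B * ∫ θ in 0..π / 2, 1 / √(1 - k * sin θ ^ 2)) := by
  have hroot_cont : Continuous fun θ => √(1 - k * sin θ ^ 2) := by fun_prop
  have hroot_ne (θ : ℝ) : √(1 - k * sin θ ^ 2) ≠ 0 :=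
    (sqrt_pos.2 (one_sub_mul_sin_sq_pos hk θ)).ne'
  have hE_cont : Continuous fun θ => A * √(1 - k * sin θ ^ 2) := continuous_const.mul hroot_cont
  have hK_cont : Continuous fun θ => B / √(1 - k * sin θ ^ 2) :=
    continuous_const.div hroot_cont hroot_ne
  have heven : Function.Even fun θ => A * √(1 - k * sin θ ^ 2) - B / √(1 - k * sin θ ^ 2) :=
    fun θ => by simp only [sin_neg, neg_sq]
  rw [heven.intervalIntegral_neg_eq_two_smul ((hE_cont.sub hK_cont).intervalIntegrable _ _),
    smul_eq_mul, intervalIntegral.integral_sub (hE_cont.intervalIntegrable _ _)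
      (hK_cont.intervalIntegrable _ _)]
  simp_rw [div_eq_mul_one_div B, intervalIntegral.integral_const_mul]

/-- Closed form of the relativistic plasma oscillation period via complete
elliptic integrals: with `a = √(2(h-1)/M)`, `γ̆(x) = h - Mx²/2`,
`α = √((h-1)/(h+1))`,
`2∫_{-a}^{a} γ̆/√(γ̆²-1) = 8√((h+1)/(2M)) [E(α) - K(α)/(h+1)]`. -/
theorem stmt_14 (M h : ℝ) (hM : 0 < M) (hh : 1 < h) :
    2 * (∫ x in (-(Real.sqrt (2 * (h - 1) / M)))..(Real.sqrt (2 * (h - 1) / M)),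
        (h - M * x ^ 2 / 2) / Real.sqrt ((h - M * x ^ 2 / 2) ^ 2 - 1))
      = 8 * Real.sqrt ((h + 1) / (2 * M)) *
        ((∫ θ in (0:ℝ)..(Real.pi / 2),
            Real.sqrt (1 - (Real.sqrt ((h - 1) / (h + 1))) ^ 2 * Real.sin θ ^ 2))
          - (∫ θ in (0:ℝ)..(Real.pi / 2),
              1 / Real.sqrt (1 - (Real.sqrt ((h - 1) / (h + 1))) ^ 2 * Real.sin θ ^ 2))
            / (h + 1)) := by
  have hk : (h - 1) / (h + 1) < 1 := (div_lt_one (by linarith)).2 (by linarith)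
  have hsubst : ∫ x in -√(2 * (h - 1) / M)..√(2 * (h - 1) / M),
      (h - M * x ^ 2 / 2) / √((h - M * x ^ 2 / 2) ^ 2 - 1) =
      ∫ θ in -(π / 2)..π / 2, 2 * √((h + 1) / (2 * M)) / (h + 1) *
        ((h + 1) * √(1 - (h - 1) / (h + 1) * sin θ ^ 2) -
          1 / √(1 - (h - 1) / (h + 1) * sin θ ^ 2)) := by
    rw [integral_eq_setIntegral_Ioo_comp_mul_sin (sqrt_pos.2 (by positivity)),
      intervalIntegral.integral_of_le (by linarith [pi_pos]), integral_Ioc_eq_integral_Ioo]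
    refine setIntegral_congr_fun measurableSet_Ioo fun θ hθ => ?_
    exact plasma_integrand_comp_mul_sin hM hh (sin_sq_add_cos_sq θ) (cos_pos_of_mem_Ioo hθ)
  rw [sq_sqrt (div_nonneg (by linarith) (by linarith)), hsubst,
    intervalIntegral.integral_const_mul, integral_mul_sqrt_sub_div_sqrt_sin_sq hk]
  field_simp
  ring
end

section
/- Let ξ₀ < ξ_f and ŝ_i : [ξ₀, ξ_f] → [0, ∞) be C¹ with ŝ_i > 0 on [ξ₀, ξ_f), ŝ_i(ξ_f) = 0, and ŝ_i'(ξ_f) = −A for some A > 0. Let ẑ_i : [ξ₀, ξ_f) → ℝ be differentiable with ẑ_i'(ξ) = (1 − ŝ_i(ξ)²)/(2 ŝ_i(ξ)²), and set γ_i(ξ) := (1 + ŝ_i(ξ)²)/(2 ŝ_i(ξ)). Then lim_{ξ → ξ_f⁻} (ξ_f − ξ) ẑ_i(ξ) = 1/(2A²) and lim_{ξ → ξ_f⁻} γ_i(ξ)/ẑ_i(ξ) = A. In particular ẑ_i(ξ) → +∞ and γ_i(ξ) → +∞ as ξ → ξ_f⁻, and the energy γ_i grows asymptotically proportionally to the travelled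 distance ẑ_i with rate A. -/
/-!
Near `ξf` the first-order expansion `si ξ ≈ A (ξf - ξ)` gives `zi' ≈ 1 / (2 A² (ξf - ξ)²)`.
Comparing `zi` with `C / (ξf - ξ)` for `C` slightly above or below `1 / (2 A²)` (the difference
is monotone) yields `(ξf - ξ) zi → 1 / (2 A²)`; directly, `(ξf - ξ) γ → 1 / (2 A)`, and the other
limits are quotients of these two.
-/

open Filter Set Topology

variable {f f' : ℝ → ℝ} {b : ℝ}

theorem tendsto_div_sub_of_hasDerivWithinAt_Iio {d : ℝ} (hf : HasDerivWithinAt f d (Iio b) b)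
    (hb : f b = 0) : Tendsto (fun x => f x / (b - x)) (𝓝[<] b) (𝓝 (-d)) := by
  rw [hasDerivWithinAt_iff_tendsto_slope' (show b ∉ Iio b from lt_irrefl b)] at hf
  refine hf.neg.congr fun x => ?_
  rw [slope_def_field, hb, sub_zero, ← neg_sub, div_neg, neg_neg]

theorem tendsto_sub_mul_const_nhdsLT (K : ℝ) :
    Tendsto (fun x => (b - x) * K) (𝓝[<] b) (𝓝 0) := by
  have : Tendsto (fun x => (b - x) * K) (𝓝 b) (𝓝 ((b - b) * K)) :=
    ((continuous_const.sub continuous_id).mul continuous_const).tendsto b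
  simpa using this.mono_left nhdsWithin_le_nhds

theorem eventually_sub_mul_lt_of_sq_mul_deriv_le {C C' : ℝ}
    (hf : ∀ᶠ x in 𝓝[<] b, HasDerivAt f (f' x) x)
    (hf' : ∀ᶠ x in 𝓝[<] b, (b - x) ^ 2 * f' x ≤ C) (hC : C < C') :
    ∀ᶠ x in 𝓝[<] b, (b - x) * f x < C' := by
  obtain ⟨c, hcb : c < b, hsub⟩ := mem_nhdsLT_iff_exists_Ioo_subset.1 (hf.and hf')
  have hg : ∀ x ∈ Ioo c b, HasDerivAt (fun y => f y - C * (b - y)⁻¹)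
      (f' x - C * (- -1 / (b - x) ^ 2)) x := fun x hx =>
    (hsub hx).1.sub ((((hasDerivAt_id x).const_sub b).inv (sub_ne_zero.2 hx.2.ne')).const_mul C)
  have hanti : AntitoneOn (fun y => f y - C * (b - y)⁻¹) (Ioo c b) := by
    refine antitoneOn_of_hasDerivWithinAt_nonpos (f' := fun x => f' x - C * (- -1 / (b - x) ^ 2))
      (convex_Ioo c b)
      (fun x hx => (hg x hx).continuousAt.continuousWithinAt) ?_ ?_ <;> rw [interior_Ioo]
    · exact fun x hx => (hg x hx).hasDerivWithinAt
    · intro x hx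
      have hd : 0 < (b - x) ^ 2 := pow_pos (sub_pos.2 hx.2) 2
      rw [neg_neg, ← div_eq_mul_one_div, sub_nonpos, le_div_iff₀ hd, mul_comm]
      exact (hsub hx).2
  obtain ⟨d, hd⟩ : ∃ d, d ∈ Ioo c b := exists_between hcb
  filter_upwards [Ioo_mem_nhdsLT hd.2,
    (tendsto_sub_mul_const_nhdsLT (f d - C * (b - d)⁻¹)).eventually (gt_mem_nhds (sub_pos.2 hC))]
    with x hx hsmall
  have hle := hanti hd ⟨hd.1.trans hx.1, hx.2⟩ hx.1.le
  have hpos : 0 < b - x := sub_pos.2 hx.2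
  calc (b - x) * f x ≤ (b - x) * (C * (b - x)⁻¹ + (f d - C * (b - d)⁻¹)) := by
        gcongr; simp only at hle; linarith
    _ = C + (b - x) * (f d - C * (b - d)⁻¹) := by field_simp
    _ < C' := by linarith

theorem tendsto_sub_mul_of_tendsto_sq_mul_deriv {L : ℝ}
    (hf : ∀ᶠ x in 𝓝[<] b, HasDerivAt f (f' x) x)
    (hf' : Tendsto (fun x => (b - x) ^ 2 * f' x) (𝓝[<] b) (𝓝 L)) :
    Tendsto (fun x => (b - x) * f x) (𝓝[<] b) (𝓝 L) := by
  refine tendsto_order.2 ⟨fun l hl => ?_, fun u hu => ?_⟩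
  · have hneg := eventually_sub_mul_lt_of_sq_mul_deriv_le (f := -f) (f' := -f')
      (C := -((l + L) / 2)) (C' := -l) (hf.mono fun x hx => hx.neg)
      ((hf'.eventually (lt_mem_nhds (by linarith : (l + L) / 2 < L))).mono fun x hx => by
        simp only [Pi.neg_apply, mul_neg]; linarith) (by linarith)
    filter_upwards [hneg] with x hx
    simp only [Pi.neg_apply, mul_neg] at hx
    linarith
  · exact eventually_sub_mul_lt_of_sq_mul_deriv_le hf
      ((hf'.eventually (gt_mem_nhds (by linarith : L < (L + u) / 2))).mono fun x hx => hx.le)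
      (by linarith)

theorem tendsto_atTop_of_tendsto_sub_mul {g : ℝ → ℝ} {L : ℝ} (hL : 0 < L)
    (h : Tendsto (fun x => (b - x) * g x) (𝓝[<] b) (𝓝 L)) : Tendsto g (𝓝[<] b) atTop := by
  have hinv : Tendsto (fun x => (b - x)⁻¹) (𝓝[<] b) atTop := by
    refine tendsto_inv_nhdsGT_zero.comp (tendsto_nhdsWithin_iff.2 ⟨?_, ?_⟩)
    · simpa using tendsto_sub_mul_const_nhdsLT (b := b) 1
    · filter_upwards [self_mem_nhdsWithin] with x hx using sub_pos.2 hx.out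
  refine (h.pos_mul_atTop hL hinv).congr' ?_
  filter_upwards [self_mem_nhdsWithin] with x hx
  rw [mul_comm, ← mul_assoc, inv_mul_cancel₀ (sub_pos.2 hx.out).ne', one_mul]

theorem stmt_17_general (ξ₀ ξf A : ℝ) (hlt : ξ₀ < ξf) (hA : 0 < A)
    (si si' zi : ℝ → ℝ)
    (hsi_deriv : ∀ ξ ∈ Set.Icc ξ₀ ξf, HasDerivWithinAt si (si' ξ) (Set.Icc ξ₀ ξf) ξ)
    (hsi_f : si ξf = 0)
    (hsi'_f : si' ξf = -A)
    (hzi : ∀ ξ ∈ Set.Ico ξ₀ ξf,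
      HasDerivWithinAt zi ((1 - (si ξ) ^ 2) / (2 * (si ξ) ^ 2)) (Set.Ico ξ₀ ξf) ξ) :
    Filter.Tendsto (fun ξ => (ξf - ξ) * zi ξ) (nhdsWithin ξf (Set.Iio ξf))
      (nhds (1 / (2 * A ^ 2))) ∧
    Filter.Tendsto (fun ξ => ((1 + (si ξ) ^ 2) / (2 * si ξ)) / zi ξ)
      (nhdsWithin ξf (Set.Iio ξf)) (nhds A) ∧
    Filter.Tendsto zi (nhdsWithin ξf (Set.Iio ξf)) Filter.atTop ∧
    Filter.Tendsto (fun ξ => (1 + (si ξ) ^ 2) / (2 * si ξ))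
      (nhdsWithin ξf (Set.Iio ξf)) Filter.atTop := by
  have hsi_left : HasDerivWithinAt si (-A) (Iio ξf) ξf := hsi'_f ▸
    (hsi_deriv ξf ⟨hlt.le, le_rfl⟩).mono_of_mem_nhdsWithin (Icc_mem_nhdsLT hlt)
  have hsi_zero : Tendsto si (𝓝[<] ξf) (𝓝 0) := hsi_f ▸ hsi_left.continuousWithinAt
  have hsi_ratio : Tendsto (fun ξ => si ξ / (ξf - ξ)) (𝓝[<] ξf) (𝓝 A) := by
    simpa using tendsto_div_sub_of_hasDerivWithinAt_Iio hsi_left hsi_f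
  have hzi_at : ∀ᶠ ξ in 𝓝[<] ξf, HasDerivAt zi ((1 - si ξ ^ 2) / (2 * si ξ ^ 2)) ξ := by
    filter_upwards [Ioo_mem_nhdsLT hlt] with ξ hξ
    exact (hzi ξ (Ioo_subset_Ico_self hξ)).hasDerivAt (Ico_mem_nhds hξ.1 hξ.2)
  have hzi_deriv : Tendsto (fun ξ => (ξf - ξ) ^ 2 * ((1 - si ξ ^ 2) / (2 * si ξ ^ 2)))
      (𝓝[<] ξf) (𝓝 (1 / (2 * A ^ 2))) := by
    have := ((tendsto_const_nhds (x := (1 : ℝ))).sub (hsi_zero.pow 2)).div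
      ((hsi_ratio.pow 2).const_mul 2) (by positivity : 2 * A ^ 2 ≠ 0)
    rw [zero_pow two_ne_zero, sub_zero] at this
    -- `a / (b / c) = a * c / b` holds in a field without side conditions
    refine this.congr fun ξ => ?_
    rw [Pi.div_apply, div_pow, ← mul_div_assoc, div_div_eq_mul_div]; ring
  have hzi_lim := tendsto_sub_mul_of_tendsto_sq_mul_deriv hzi_at hzi_deriv
  have hγ_lim : Tendsto (fun ξ => (ξf - ξ) * ((1 + si ξ ^ 2) / (2 * si ξ)))
      (𝓝[<] ξf) (𝓝 (1 / (2 * A))) := by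
    have := ((tendsto_const_nhds (x := (1 : ℝ))).add (hsi_zero.pow 2)).div
      (hsi_ratio.const_mul 2) (by positivity : 2 * A ≠ 0)
    rw [zero_pow two_ne_zero, add_zero] at this
    refine this.congr fun ξ => ?_
    rw [Pi.div_apply, ← mul_div_assoc, div_div_eq_mul_div]; ring
  refine ⟨hzi_lim, ?_, tendsto_atTop_of_tendsto_sub_mul (by positivity) hzi_lim,
    tendsto_atTop_of_tendsto_sub_mul (by positivity) hγ_lim⟩
  have hA' : 1 / (2 * A) / (1 / (2 * A ^ 2)) = A := by field_simp
  refine hA' ▸ (hγ_lim.div hzi_lim (by positivity)).congr' ?_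
  filter_upwards [self_mem_nhdsWithin] with ξ hξ
  exact mul_div_mul_left _ _ (sub_pos.2 hξ.out).ne'

/-- If `ŝ_i` is C¹ on `[ξ₀,ξ_f]`, positive on `[ξ₀,ξ_f)`, vanishing at `ξ_f`
with slope `-A < 0`, and `ẑ_i' = (1-ŝ_i²)/(2ŝ_i²)`, then
`(ξ_f-ξ) ẑ_i(ξ) → 1/(2A²)` and `γ_i/ẑ_i → A` as `ξ → ξ_f⁻`; in particular
`ẑ_i → +∞` and `γ_i → +∞`. -/
theorem stmt_17 (ξ₀ ξf A : ℝ) (hlt : ξ₀ < ξf) (hA : 0 < A)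
    (si si' zi : ℝ → ℝ)
    (hsi_nonneg : ∀ ξ ∈ Set.Icc ξ₀ ξf, 0 ≤ si ξ)
    (hsi_deriv : ∀ ξ ∈ Set.Icc ξ₀ ξf, HasDerivWithinAt si (si' ξ) (Set.Icc ξ₀ ξf) ξ)
    (hsi'_cont : ContinuousOn si' (Set.Icc ξ₀ ξf))
    (hsi_pos : ∀ ξ ∈ Set.Ico ξ₀ ξf, 0 < si ξ)
    (hsi_f : si ξf = 0)
    (hsi'_f : si' ξf = -A)
    (hzi : ∀ ξ ∈ Set.Ico ξ₀ ξf,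
      HasDerivWithinAt zi ((1 - (si ξ) ^ 2) / (2 * (si ξ) ^ 2)) (Set.Ico ξ₀ ξf) ξ) :
    Filter.Tendsto (fun ξ => (ξf - ξ) * zi ξ) (nhdsWithin ξf (Set.Iio ξf))
      (nhds (1 / (2 * A ^ 2))) ∧
    Filter.Tendsto (fun ξ => ((1 + (si ξ) ^ 2) / (2 * si ξ)) / zi ξ)
      (nhdsWithin ξf (Set.Iio ξf)) (nhds A) ∧
    Filter.Tendsto zi (nhdsWithin ξf (Set.Iio ξf)) Filter.atTop ∧
    Filter.Tendsto (fun ξ => (1 + (si ξ) ^ 2) / (2 * si ξ))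
      (nhdsWithin ξf (Set.Iio ξf)) Filter.atTop :=
  stmt_17_general ξ₀ ξf A hlt hA si si' zi hsi_deriv hsi_f hsi'_f hzi
end
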